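/- arXiv:math/0109088 — 6 statements merged into one kernel-verified Lean document; each statement's English description precedes it below -/
import Mathlib

section
/- The number of internally resolved binary trees of height n is n!. Equivalently, internally resolved binary trees of height n are in bijection with permutations of {0,1,...,n-1}. -/
/-- A planar binary tree with internal nodes labelled by levels (leaves unlabelled). -/
inductive LTree : Type
  | leaf : LTree
  | node (lvl : ℕ) (l r : LTree) : LTree

namespace LTree

/-- The left-to-right ("valley") sequence of internal node levels. -/
def seq : LTree → List ℕ
  | leaf => []
  | node k l r => seq l ++ k :: seq r

/-- Every internal node lies at a strictly lower level than all internal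
nodes of its subtrees (the tree grows upward from the root). -/
def LevelValid : LTree → Prop
  | leaf => True
  | node k l r => (∀ m ∈ seq l, k < m) ∧ (∀ m ∈ seq r, k < m) ∧ LevelValid l ∧ LevelValid r

/-- An internally resolved binary tree of height `n`: the `n` internal nodes carry
the distinct levels `0, …, n-1`, parents below children (all leaves sit at level `n`). -/
def IsIRB (n : ℕ) (t : LTree) : Prop :=
  (seq t).Perm (List.range n) ∧ LevelValid t

end LTree

-- split lemma
lemma split_unique {k : ℕ} : ∀ (a c b d : List ℕ), k ∉ a → k ∉ c →
    a ++ k :: b = c ++ k :: d → a = c ∧ b = d := by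
  intro a
  induction a with
  | nil =>
    intro c b d _ hc h
    cases c with
    | nil => simpa using h
    | cons y c' =>
      simp only [List.nil_append, List.cons_append, List.cons.injEq] at h
      exact (hc (by rw [h.1]; exact List.mem_cons_self)).elim
  | cons x a' ih =>
    intro c b d ha hc h
    cases c with
    | nil =>
      simp at h
      exact absurd h.1 (by intro e; exact ha (by simp [e]))
    | cons y c' =>
      simp at h
      obtain ⟨rfl, h2⟩ := h
      have := ih c' b d (by simp at ha; tauto) (by simp at hc; tauto) h2
      exact ⟨by rw [this.1], this.2⟩

lemma seq_eq_nil {t : LTree} (h : LTree.seq t = []) : t = LTree.leaf := by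
  cases t with
  | leaf => rfl
  | node k l r => simp [LTree.seq] at h

lemma exu : ∀ (N : ℕ) (l : List ℕ), l.length ≤ N → l.Nodup →
    ∃! t : LTree, LTree.LevelValid t ∧ LTree.seq t = l := by
  intro N
  induction N with
  | zero =>
    intro l hl _
    have : l = [] := List.length_eq_zero_iff.mp (Nat.le_zero.mp hl)
    subst this
    refine ⟨LTree.leaf, ⟨trivial, rfl⟩, ?_⟩
    rintro t ⟨_, hs⟩; exact seq_eq_nil hs
  | succ N ih =>
    intro l hl hnd
    rcases l.eq_nil_or_concat with rfl | _
    · refine ⟨LTree.leaf, ⟨trivial, rfl⟩, ?_⟩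
      rintro t ⟨_, hs⟩; exact seq_eq_nil hs
    · -- l nonempty
      have hne : l ≠ [] := by rename_i h; obtain ⟨a, b, rfl⟩ := h; simp
      -- minimum
      have hfne : l.toFinset.Nonempty := by
        simpa [List.toFinset_eq_empty_iff] using hne
      obtain ⟨k, hkl, hkmin⟩ : ∃ k ∈ l, ∀ m ∈ l, k ≤ m :=
        ⟨l.toFinset.min' hfne, by simpa using l.toFinset.min'_mem hfne,
          fun m hm => l.toFinset.min'_le m (by simpa using hm)⟩
      obtain ⟨l₁, l₂, rfl⟩ := List.append_of_mem hkl
      have hnd1 : l₁.Nodup := (List.nodup_append.mp hnd).1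
      have hnd2 : l₂.Nodup := ((List.nodup_append.mp hnd).2.1).of_cons
      have hk1 : k ∉ l₁ := fun h => by
        have := (List.nodup_append'.mp hnd).2.2
        exact absurd (List.mem_cons_self (a := k) (l := l₂)) (by
          have := this h; simpa using this)
      have hk2 : k ∉ l₂ := by
        have := (List.nodup_append.mp hnd).2.1
        exact (List.nodup_cons.mp this).1
      have hlt1 : ∀ m ∈ l₁, k < m := fun m hm =>
        lt_of_le_of_ne (hkmin m (by simp [hm])) (fun e => hk1 (e ▸ hm))
      have hlt2 : ∀ m ∈ l₂, k < m := fun m hm =>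
        lt_of_le_of_ne (hkmin m (by simp [hm])) (fun e => hk2 (e ▸ hm))
      have hlen1 : l₁.length ≤ N := by
        have := hl; simp [List.length_append] at this; omega
      have hlen2 : l₂.length ≤ N := by
        have := hl; simp [List.length_append] at this; omega
      obtain ⟨t₁, ⟨hv1, hs1⟩, hu1⟩ := ih l₁ hlen1 hnd1
      obtain ⟨t₂, ⟨hv2, hs2⟩, hu2⟩ := ih l₂ hlen2 hnd2
      refine ⟨LTree.node k t₁ t₂, ⟨⟨by rw [hs1]; exact hlt1, by rw [hs2]; exact hlt2, hv1, hv2⟩,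
        by simp [LTree.seq, hs1, hs2]⟩, ?_⟩
      rintro t ⟨hv, hs⟩
      cases t with
      | leaf => simp [LTree.seq] at hs
      | node k' a b =>
        obtain ⟨hva, hvb, hvaa, hvbb⟩ := hv
        simp only [LTree.seq] at hs
        -- k' = k
        have hk'mem : k' ∈ l₁ ++ k :: l₂ := by rw [← hs]; simp
        have hk'le : ∀ m ∈ l₁ ++ k :: l₂, k' ≤ m := by
          intro m hm
          rw [← hs] at hm
          rcases List.mem_append.mp hm with h | h
          · exact le_of_lt (hva m h)
          · rcases List.mem_cons.mp h with rfl | h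
            · exact le_refl m
            · exact le_of_lt (hvb m h)
        have hkk : k' = k := le_antisymm (hk'le k (by simp)) (hkmin k' hk'mem)
        subst hkk
        have hka : k' ∉ LTree.seq a := fun h => lt_irrefl k' (hva _ h)
        obtain ⟨e1, e2⟩ := split_unique (LTree.seq a) l₁ (LTree.seq b) l₂ hka hk1 hs
        rw [hu1 a ⟨hvaa, e1⟩, hu2 b ⟨hvbb, e2⟩]

/-- The number of internally resolved binary trees of height `n` is `n!`;
moreover the valley sequence of internal node levels is a bijection between
IRB trees of height `n` and permutations (linear orderings) of `{0, …, n-1}`. -/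
theorem irb_card_eq_factorial (n : ℕ) :
    Nat.card {t : LTree // LTree.IsIRB n t} = n.factorial ∧
    Set.BijOn LTree.seq {t : LTree | LTree.IsIRB n t}
      {l : List ℕ | l.Perm (List.range n)} := by
  have hbij : Set.BijOn LTree.seq {t : LTree | LTree.IsIRB n t}
      {l : List ℕ | l.Perm (List.range n)} := by
    refine ⟨fun t ht => ht.1, ?_, ?_⟩
    · intro t ht t' ht' h
      have hnd : (LTree.seq t).Nodup := (ht.1.nodup_iff).mpr List.nodup_range
      obtain ⟨u, _, huniq⟩ := exu (LTree.seq t).length (LTree.seq t) le_rfl hnd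
      exact (huniq t ⟨ht.2, rfl⟩).trans (huniq t' ⟨ht'.2, h.symm⟩).symm
    · intro l hl
      have hnd : l.Nodup := ((hl : l.Perm (List.range n)).nodup_iff).mpr List.nodup_range
      obtain ⟨t, ⟨hv, hs⟩, _⟩ := exu l.length l le_rfl hnd
      exact ⟨t, ⟨hs ▸ hl, hv⟩, hs⟩
  refine ⟨?_, hbij⟩
  have : Nat.card {t : LTree // LTree.IsIRB n t} =
      Nat.card {l : List ℕ | l.Perm (List.range n)} :=
    Nat.card_congr (hbij.equiv _)
  rw [this]
  have hset : {l : List ℕ | l.Perm (List.range n)} = ↑((List.range n).permutations.toFinset) := by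
    ext l; simp [List.mem_permutations, List.perm_comm]
  rw [hset]
  rw [Nat.card_coe_set_eq, Set.ncard_coe_finset,
    List.toFinset_card_of_nodup (List.nodup_permutations _ List.nodup_range),
    List.length_permutations, List.length_range]
end

section
/- For any two internally resolved binary trees of height n, there is a finite sequence of primitive arrows (level-interchange moves and edge-reattachment moves) transforming one into the other. Equivalently, identifying IRB trees with permutations of {0,...,n-1}, the graph whose edges are the primitive moves is connected. -/
namespace LTree

/-- Primitive moves on IRB trees: reattachment of an edge about a pivot
(associativity, in both directions) and interchange of the levels of the two
branch children of a pivot (the deformation `q`), applied anywhere in the tree. -/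
inductive Move : LTree → LTree → Prop
  | assoc (k l : ℕ) (A B C : LTree) :
      Move (node k (node l A B) C) (node k A (node l B C))
  | assocInv (k l : ℕ) (A B C : LTree) :
      Move (node k A (node l B C)) (node k (node l A B) C)
  | interchange (k a b : ℕ) (A B C D : LTree) :
      Move (node k (node a A B) (node b C D)) (node k (node b A B) (node a C D))
  | congrL (k : ℕ) {l l' : LTree} (r : LTree) : Move l l' → Move (node k l r) (node k l' r)
  | congrR (k : ℕ) (l : LTree) {r r' : LTree} : Move r r' → Move (node k l r) (node k l r')

/-- A primitive arrow of the groupoid `IRBTree`: a primitive move between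
valid IRB trees of height `n`. -/
def MoveIRB (n : ℕ) (s t : LTree) : Prop := Move s t ∧ IsIRB n s ∧ IsIRB n t

end LTree


namespace LTreeAux
open LTree

/-- Moves whose endpoints are both level-valid (heights unconstrained). -/
def R (a b : LTree) : Prop := LTree.Move a b ∧ LTree.LevelValid a ∧ LTree.LevelValid b

lemma move_symm : ∀ {a b : LTree}, LTree.Move a b → LTree.Move b a := by
  intro a b h
  induction h with
  | assoc k l A B C => exact .assocInv k l A B C
  | assocInv k l A B C => exact .assoc k l A B C
  | interchange k a b A B C D => exact .interchange k b a A B C D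
  | congrL k r h ih => exact .congrL k r ih
  | congrR k l h ih => exact .congrR k l ih

lemma move_perm : ∀ {a b : LTree}, LTree.Move a b → (seq a).Perm (seq b) := by
  intro a b h
  induction h with
  | assoc k l A B C =>
      show ((seq A ++ l :: seq B) ++ k :: seq C).Perm (seq A ++ k :: (seq B ++ l :: seq C))
      refine List.perm_iff_count.mpr fun x => ?_
      simp [List.count_append, List.count_cons]
      split_ifs <;> omega
  | assocInv k l A B C =>
      show (seq A ++ k :: (seq B ++ l :: seq C)).Perm ((seq A ++ l :: seq B) ++ k :: seq C)
      refine List.perm_iff_count.mpr fun x => ?_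
      simp [List.count_append, List.count_cons]
      split_ifs <;> omega
  | interchange k a b A B C D =>
      show ((seq A ++ a :: seq B) ++ k :: (seq C ++ b :: seq D)).Perm
        ((seq A ++ b :: seq B) ++ k :: (seq C ++ a :: seq D))
      refine List.perm_iff_count.mpr fun x => ?_
      simp [List.count_append, List.count_cons]
      split_ifs <;> omega
  | congrL k r h ih =>
      exact (ih.append_right _)
  | congrR k l h ih =>
      exact List.Perm.append_left _ (ih.cons _)

lemma rtg_perm {a b : LTree} (h : Relation.ReflTransGen R a b) : (seq a).Perm (seq b) := by
  induction h with
  | refl => exact List.Perm.refl _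
  | tail _ h2 ih => exact ih.trans (move_perm h2.1)

lemma rtg_congrL (k : ℕ) {l l' : LTree} (r : LTree)
    (h : Relation.ReflTransGen R l l')
    (hr : LevelValid r) (hkr : ∀ m ∈ seq r, k < m) (hkl : ∀ m ∈ seq l, k < m)
    (hl : LevelValid l) :
    Relation.ReflTransGen R (node k l r) (node k l' r) := by
  induction h with
  | refl => exact .refl
  | @tail b c h1 h2 ih =>
      refine ih.tail ?_
      have hb : ∀ m ∈ seq b, k < m := fun m hm => hkl m ((rtg_perm h1).mem_iff.mpr hm)
      have hc : ∀ m ∈ seq c, k < m := fun m hm =>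
        hkl m (((rtg_perm h1).trans (move_perm h2.1)).mem_iff.mpr hm)
      exact ⟨.congrL k r h2.1, ⟨hb, hkr, h2.2.1, hr⟩, ⟨hc, hkr, h2.2.2, hr⟩⟩

lemma rtg_congrR (k : ℕ) (l : LTree) {r r' : LTree}
    (h : Relation.ReflTransGen R r r')
    (hl : LevelValid l) (hkl : ∀ m ∈ seq l, k < m) (hkr : ∀ m ∈ seq r, k < m)
    (hr : LevelValid r) :
    Relation.ReflTransGen R (node k l r) (node k l r') := by
  induction h with
  | refl => exact .refl
  | @tail b c h1 h2 ih =>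
      refine ih.tail ?_
      have hb : ∀ m ∈ seq b, k < m := fun m hm => hkr m ((rtg_perm h1).mem_iff.mpr hm)
      have hc : ∀ m ∈ seq c, k < m := fun m hm =>
        hkr m (((rtg_perm h1).trans (move_perm h2.1)).mem_iff.mpr hm)
      exact ⟨.congrR k l h2.1, ⟨hkl, hb, hl, h2.2.1⟩, ⟨hkl, hc, hl, h2.2.2⟩⟩

/-- The right comb built from a list of levels. -/
def comb : List ℕ → LTree
  | [] => .leaf
  | a :: l => .node a .leaf (comb l)

@[simp] lemma seq_comb : ∀ l : List ℕ, seq (comb l) = l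
  | [] => rfl
  | a :: l => by simp [comb, seq, seq_comb l]

lemma valid_comb : ∀ {l : List ℕ}, l.Pairwise (· < ·) → LevelValid (comb l)
  | [], _ => trivial
  | a :: l, h => by
      rw [List.pairwise_cons] at h
      exact ⟨by simp [seq], by simpa using h.1, trivial, valid_comb h.2⟩

lemma shift : ∀ (xs : List ℕ) (k : ℕ), xs.Pairwise (· < ·) → (∀ m ∈ xs, k < m) →
    Relation.ReflTransGen R (node k (comb xs) .leaf) (comb (k :: xs))
  | [], k, _, _ => .refl
  | a :: xs, k, hs, hk => by
      rw [List.pairwise_cons] at hs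
      have hax : ∀ m ∈ xs, a < m := hs.1
      have hka : k < a := hk a (by simp)
      have hkx : ∀ m ∈ a :: xs, k < m := hk
      have vx : LevelValid (comb xs) := valid_comb hs.2
      have vax : LevelValid (comb (a :: xs)) := valid_comb (List.pairwise_cons.mpr hs)
      have step : R (node k (comb (a :: xs)) .leaf) (node k .leaf (node a (comb xs) .leaf)) := by
        refine ⟨?_, ⟨by simpa using hkx, by simp [seq], vax, trivial⟩,
          ⟨by simp [seq], ?_, trivial, by simpa using hax, by simp [seq], vx, trivial⟩⟩
        · exact .assoc k a .leaf (comb xs) .leaf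
        · intro m hm
          simp [seq] at hm
          rcases hm with hm | rfl
          · exact hk m (by simp [hm])
          · exact hka
      refine (Relation.ReflTransGen.single step).trans ?_
      have ih := shift xs a hs.2 hax
      exact rtg_congrR k .leaf ih trivial (by simp [seq]) (by
        intro m hm; simp [seq] at hm
        rcases hm with hm | rfl
        · exact hk m (by simp [hm])
        · exact hka)
        ⟨by simpa using hax, by simp [seq], vx, trivial⟩

lemma sorted_perm_head {t : List ℕ} {k : ℕ} {r : List ℕ} (hs : t.Pairwise (· < ·))
    (hp : t.Perm (k :: r)) (hk : ∀ m ∈ r, k < m) : ∃ t', t = k :: t' ∧ t'.Perm r := by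
  cases t with
  | nil =>
      have : k ∈ ([] : List ℕ) := hp.symm.subset (by simp)
      simp at this
  | cons a t' =>
      have ha : a ∈ k :: r := hp.mem_iff.mp (by simp)
      rcases List.mem_cons.mp ha with rfl | ha
      · exact ⟨t', rfl, hp.cons_inv⟩
      · exfalso
        have hka : k < a := hk a ha
        have hkmem : k ∈ a :: t' := hp.symm.mem_iff.mp (by simp)
        rcases List.mem_cons.mp hkmem with rfl | hkmem
        · exact lt_irrefl _ hka
        · exact lt_asymm hka (List.rel_of_pairwise_cons hs hkmem)

lemma merge_lem : ∀ (N : ℕ) (xs ys : List ℕ) (k : ℕ) (t : List ℕ),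
    xs.length + ys.length ≤ N →
    xs.Pairwise (· < ·) → ys.Pairwise (· < ·) →
    (∀ m ∈ xs, k < m) → (∀ m ∈ ys, k < m) →
    (∀ m ∈ xs, ∀ m' ∈ ys, m ≠ m') →
    t.Pairwise (· < ·) → t.Perm (k :: (xs ++ ys)) →
    Relation.ReflTransGen R (node k (comb xs) (comb ys)) (comb t) := by
  intro N
  induction N with
  | zero =>
      intro xs ys k t hN hxs hys hkx hky hd hts htp
      have : xs = [] ∧ ys = [] := by
        constructor <;> [exact List.length_eq_zero_iff.mp (by omega);
          exact List.length_eq_zero_iff.mp (by omega)]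
      obtain ⟨rfl, rfl⟩ := this
      obtain ⟨t', rfl, ht'⟩ := sorted_perm_head hts htp (by simp)
      have : t' = [] := ht'.eq_nil
      subst this
      exact .refl
  | succ N ih =>
      intro xs ys k t hN hxs hys hkx hky hd hts htp
      obtain ⟨t', rfl, ht'⟩ := sorted_perm_head hts htp (by
        intro m hm
        rcases List.mem_append.mp hm with h | h
        exacts [hkx m h, hky m h])
      have hts' : t'.Pairwise (· < ·) := (List.pairwise_cons.mp hts).2
      match xs, ys with
      | [], ys =>
          have : t' = ys := List.Perm.eq_of_pairwise' (hts'.imp le_of_lt) (hys.imp le_of_lt)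
            (ht'.trans (by simp))
          subst this
          exact .refl
      | a :: xs, [] =>
          have : t' = a :: xs := List.Perm.eq_of_pairwise' (hts'.imp le_of_lt) (hxs.imp le_of_lt)
            (ht'.trans (by simp))
          subst this
          exact shift (a :: xs) k hxs hkx
      | a :: xs, b :: ys =>
          rw [List.pairwise_cons] at hxs hys
          have hab : a ≠ b := hd a (by simp) b (by simp)
          have vxa : LevelValid (comb (a :: xs)) :=
            valid_comb (List.pairwise_cons.mpr hxs)
          have vyb : LevelValid (comb (b :: ys)) :=
            valid_comb (List.pairwise_cons.mpr hys)
          have vx : LevelValid (comb xs) := valid_comb hxs.2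
          have vy : LevelValid (comb ys) := valid_comb hys.2
          have hka : k < a := hkx a (by simp)
          have hkb : k < b := hky b (by simp)
          have hkall : ∀ m, (m = a ∨ m ∈ xs ∨ m = b ∨ m ∈ ys) → k < m := by
            rintro m (rfl | hm | rfl | hm)
            · exact hka
            · exact hkx m (by simp [hm])
            · exact hkb
            · exact hky m (by simp [hm])
          rcases lt_or_gt_of_ne hab with hlt | hgt
          · -- a < b : assoc at root, then recurse
            have hay : ∀ m ∈ b :: ys, a < m := by
              intro m hm
              rcases List.mem_cons.mp hm with rfl | hm
              · exact hlt
              · exact hlt.trans (hys.1 m hm)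
            have vinner : LevelValid (node a (comb xs) (comb (b :: ys))) :=
              ⟨by simpa using hxs.1, by simpa using hay, vx, vyb⟩
            have hmem1 : ∀ m ∈ seq (node a (comb xs) (comb (b :: ys))), k < m := by
              intro m hm
              apply hkall
              simp [seq] at hm
              tauto
            have step : R (node k (comb (a :: xs)) (comb (b :: ys)))
                (node k .leaf (node a (comb xs) (comb (b :: ys)))) :=
              ⟨.assoc k a .leaf (comb xs) (comb (b :: ys)),
                ⟨by simpa using hkx, by simpa using hky, vxa, vyb⟩,
                ⟨by simp [seq], hmem1, trivial, vinner⟩⟩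
            refine (Relation.ReflTransGen.single step).trans ?_
            have hrec := ih xs (b :: ys) a t' (by simp at hN ⊢; omega) hxs.2
              (List.pairwise_cons.mpr hys) hxs.1 hay
              (fun m hm m' hm' => hd m (by simp [hm]) m' hm') hts'
              (by simpa using ht')
            exact rtg_congrR k .leaf hrec trivial (by simp [seq]) hmem1 vinner
          · -- b < a : pull b over to the left, shift, then assoc and recurse
            have hbx : ∀ m ∈ a :: xs, b < m := by
              intro m hm
              rcases List.mem_cons.mp hm with rfl | hm
              · exact hgt
              · exact hgt.trans (hxs.1 m hm)
            have hky' : ∀ m ∈ seq (comb ys), k < m := by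
              intro m hm
              apply hkall
              simp at hm
              tauto
            have vbl : LevelValid (node b (comb (a :: xs)) .leaf) :=
              ⟨by simpa using hbx, by simp [seq], vxa, trivial⟩
            have hmem2 : ∀ m ∈ seq (node b (comb (a :: xs)) .leaf), k < m := by
              intro m hm
              apply hkall
              simp [seq] at hm
              tauto
            have step1 : R (node k (comb (a :: xs)) (comb (b :: ys)))
                (node k (node b (comb (a :: xs)) .leaf) (comb ys)) :=
              ⟨.assocInv k b (comb (a :: xs)) .leaf (comb ys),
                ⟨by simpa using hkx, by simpa using hky, vxa, vyb⟩,
                ⟨hmem2, hky', vbl, vy⟩⟩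
            refine (Relation.ReflTransGen.single step1).trans ?_
            have hshift := shift (a :: xs) b (List.pairwise_cons.mpr hxs) hbx
            refine (rtg_congrL k (comb ys) hshift vy hky' hmem2 vbl).trans ?_
            have hsob : (b :: a :: xs).Pairwise (· < ·) :=
              List.pairwise_cons.mpr ⟨hbx, List.pairwise_cons.mpr hxs⟩
            have hbax : ∀ m ∈ seq (comb (b :: a :: xs)), k < m := by
              intro m hm
              apply hkall
              simp at hm
              tauto
            have vinner : LevelValid (node b (comb (a :: xs)) (comb ys)) :=
              ⟨by simpa using hbx, by simpa using hys.1, vxa, vy⟩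
            have hmem3 : ∀ m ∈ seq (node b (comb (a :: xs)) (comb ys)), k < m := by
              intro m hm
              apply hkall
              simp [seq] at hm
              tauto
            have step2 : R (node k (comb (b :: a :: xs)) (comb ys))
                (node k .leaf (node b (comb (a :: xs)) (comb ys))) :=
              ⟨.assoc k b .leaf (comb (a :: xs)) (comb ys),
                ⟨hbax, hky', valid_comb hsob, vy⟩,
                ⟨by simp [seq], hmem3, trivial, vinner⟩⟩
            refine (Relation.ReflTransGen.single step2).trans ?_
            have hrec := ih (a :: xs) ys b t' (by simp at hN ⊢; omega)
              (List.pairwise_cons.mpr hxs) hys.2 hbx hys.1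
              (fun m hm m' hm' => hd m hm m' (by simp [hm'])) hts'
              (ht'.trans (List.perm_middle (a := b) (l₁ := a :: xs) (l₂ := ys)))
            exact rtg_congrR k .leaf hrec trivial (by simp [seq]) hmem3 vinner

lemma to_comb : ∀ (u : LTree), LevelValid u → ∀ l : List ℕ, l.Pairwise (· < ·) →
    (seq u).Perm l → Relation.ReflTransGen R u (comb l) := by
  intro u
  induction u with
  | leaf =>
      intro _ l _ hp
      have : l = [] := hp.symm.eq_nil
      subst this; exact .refl
  | node k lt rt ihl ihr =>
      intro hv l hls hp
      obtain ⟨hkl, hkr, hvl, hvr⟩ := hv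
      have hnod : (seq (node k lt rt)).Nodup := hp.nodup_iff.mpr hls.nodup
      have hseq : seq (node k lt rt) = seq lt ++ k :: seq rt := rfl
      rw [hseq, List.nodup_append] at hnod
      have hnl : (seq lt).Nodup := hnod.1
      have hnr : (seq rt).Nodup := (List.nodup_cons.mp hnod.2.1).2
      set lx := List.insertionSort (· ≤ ·) (seq lt) with hlx
      set ly := List.insertionSort (· ≤ ·) (seq rt) with hly
      have hpx : lx.Perm (seq lt) := List.perm_insertionSort _ _
      have hpy : ly.Perm (seq rt) := List.perm_insertionSort _ _
      have hsx : lx.Pairwise (· < ·) :=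
        (List.pairwise_insertionSort _ _).imp₂ (fun _ _ h1 h2 => lt_of_le_of_ne h1 h2) (hpx.nodup_iff.mpr hnl)
      have hsy : ly.Pairwise (· < ·) :=
        (List.pairwise_insertionSort _ _).imp₂ (fun _ _ h1 h2 => lt_of_le_of_ne h1 h2) (hpy.nodup_iff.mpr hnr)
      have h1 := rtg_congrL k rt (ihl hvl lx hsx hpx.symm) hvr hkr hkl hvl
      have h2 := rtg_congrR k (comb lx) (ihr hvr ly hsy hpy.symm) (valid_comb hsx)
        (by intro m hm; exact hkl m (hpx.mem_iff.mp (by simpa using hm))) hkr hvr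
      refine (h1.trans h2).trans ?_
      refine merge_lem (lx.length + ly.length) lx ly k l le_rfl hsx hsy
        (fun m hm => hkl m (hpx.mem_iff.mp hm))
        (fun m hm => hkr m (hpy.mem_iff.mp hm))
        ?_ hls ?_
      · intro m hm m' hm' he
        subst he
        exact hnod.2.2 _ (hpx.mem_iff.mp hm) _ (by simp [hpy.mem_iff.mp hm']) rfl
      · refine hp.symm.trans ?_
        rw [hseq]
        refine List.perm_middle.trans ?_
        exact (hpx.append hpy).symm.cons k

lemma rtg_lift {n : ℕ} {s c : LTree} (h : Relation.ReflTransGen R s c)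
    (hs : (seq s).Perm (List.range n)) :
    Relation.ReflTransGen (MoveIRB n) s c := by
  induction h with
  | refl => exact .refl
  | @tail b c h1 h2 ih =>
      refine ih.tail ⟨h2.1, ⟨(rtg_perm h1).symm.trans hs, h2.2.1⟩,
        ⟨((rtg_perm h1).trans (move_perm h2.1)).symm.trans hs, h2.2.2⟩⟩

lemma rtg_symm {n : ℕ} {a b : LTree} (h : Relation.ReflTransGen (MoveIRB n) a b) :
    Relation.ReflTransGen (MoveIRB n) b a := by
  induction h with
  | refl => exact .refl
  | tail h1 h2 ih =>
      exact (Relation.ReflTransGen.single ⟨move_symm h2.1, h2.2.2, h2.2.1⟩).trans ih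

end LTreeAux

/-- Any two internally resolved binary trees of height `n` are connected by a
finite sequence of primitive arrows (level interchanges and edge reattachments). -/
theorem irb_connected (n : ℕ) (s t : LTree)
    (hs : LTree.IsIRB n s) (ht : LTree.IsIRB n t) :
    Relation.ReflTransGen (LTree.MoveIRB n) s t := by
  have hsr := LTreeAux.rtg_lift (LTreeAux.to_comb s hs.2 (List.range n)
    List.pairwise_lt_range hs.1) hs.1
  have htr := LTreeAux.rtg_lift (LTreeAux.to_comb t ht.2 (List.range n)
    List.pairwise_lt_range ht.1) ht.1
  exact hsr.trans (LTreeAux.rtg_symm htr)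
end

section
/- Every internally resolved binary tree of height n is the source of at most n-1 distinct primitive arrows. -/
namespace LTree

/-- Moves labelled by the level of the child pivot involved. -/
inductive LMove : ℕ → LTree → LTree → Prop
  | assoc (k l : ℕ) (A B C : LTree) :
      LMove l (node k (node l A B) C) (node k A (node l B C))
  | assocInv (k l : ℕ) (A B C : LTree) :
      LMove l (node k A (node l B C)) (node k (node l A B) C)
  | inter (v k a b : ℕ) (A B C D : LTree) (hv : v = max a b) :
      LMove v (node k (node a A B) (node b C D)) (node k (node b A B) (node a C D))
  | congrL (k : ℕ) {l l' : LTree} (r : LTree) {v : ℕ} :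
      LMove v l l' → LMove v (node k l r) (node k l' r)
  | congrR (k : ℕ) (l : LTree) {r r' : LTree} {v : ℕ} :
      LMove v r r' → LMove v (node k l r) (node k l r')

lemma move_lmove {t u : LTree} (h : Move t u) : ∃ v, LMove v t u := by
  induction h with
  | assoc k l A B C => exact ⟨l, .assoc k l A B C⟩
  | assocInv k l A B C => exact ⟨l, .assocInv k l A B C⟩
  | interchange k a b A B C D => exact ⟨max a b, .inter _ k a b A B C D rfl⟩
  | congrL k r _ ih => obtain ⟨v, hv⟩ := ih; exact ⟨v, .congrL k r hv⟩
  | congrR k l _ ih => obtain ⟨v, hv⟩ := ih; exact ⟨v, .congrR k l hv⟩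

lemma lmove_mem {v : ℕ} {t u : LTree} (h : LMove v t u) : v ∈ seq t := by
  induction h with
  | assoc k l A B C => simp [seq]
  | assocInv k l A B C => simp [seq]
  | inter v k a b A B C D hv =>
      subst hv
      rcases Nat.le_total a b with h | h
      · simp [seq, Nat.max_eq_right h]
      · simp [seq, Nat.max_eq_left h]
  | congrL k r _ ih => simp only [seq]; exact List.mem_append_left _ ih
  | congrR k l _ ih =>
      simp only [seq]; exact List.mem_append_right _ (List.mem_cons_of_mem _ ih)

lemma lmove_lt {v k : ℕ} {l r u : LTree} (h : LMove v (node k l r) u)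
    (hval : LevelValid (node k l r)) : k < v := by
  obtain ⟨h1, h2, -, -⟩ := hval
  cases h with
  | assoc k l A B C => exact h1 _ (by simp [seq])
  | assocInv k l A B C => exact h2 _ (by simp [seq])
  | inter v k a b A B C D hv =>
      subst hv
      rcases Nat.le_total a b with hab | hab
      · rw [Nat.max_eq_right hab]; exact h2 _ (by simp [seq])
      · rw [Nat.max_eq_left hab]; exact h1 _ (by simp [seq])
  | congrL k r hm => exact h1 _ (lmove_mem hm)
  | congrR k l hm => exact h2 _ (lmove_mem hm)

lemma nodup_not_both {k v : ℕ} {l r : LTree} (h : (seq (node k l r)).Nodup)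
    (h1 : v ∈ seq l) (h2 : v ∈ seq r) : False := by
  simp only [seq, List.nodup_append] at h
  exact h.2.2 v h1 v (List.mem_cons_of_mem _ h2) rfl

lemma lmove_unique : ∀ {v : ℕ} {t u : LTree}, LMove v t u → ∀ {u' : LTree}, LMove v t u' →
    (seq t).Nodup → LevelValid t → LevelValid u → LevelValid u' → u = u' := by
  intro v t u h
  induction h with
  | assoc k l A B C =>
      intro u' h' hnd hT hU hU'
      cases h' with
      | assoc k1 l1 A1 B1 C1 => rfl
      | assocInv k1 l1 A1 B1 C1 =>
          exact absurd (nodup_not_both hnd (by simp [seq] : l ∈ seq (node l A B))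
            (by simp [seq] : l ∈ seq (node l B1 C1))) id
      | inter v1 k1 a1 b1 A1 B1 C1 D1 hveq =>
          obtain ⟨-, -, -, h4⟩ := hU
          obtain ⟨-, g2, -, -⟩ := h4
          have hb : l < b1 := g2 b1 (by simp [seq])
          have hb' : b1 ≤ l := by rw [hveq]; exact Nat.le_max_right l b1
          omega
      | congrL k1 r1 hm =>
          obtain ⟨-, -, hl, -⟩ := hT
          have := lmove_lt hm hl
          omega
      | congrR k1 l1 hm =>
          have hmem := lmove_mem hm
          exact absurd (nodup_not_both hnd (by simp [seq] : l ∈ seq (node l A B)) hmem) id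
  | assocInv k l A B C =>
      intro u' h' hnd hT hU hU'
      cases h' with
      | assoc k1 l1 A1 B1 C1 =>
          exact absurd (nodup_not_both hnd (by simp [seq] : l ∈ seq (node l A1 B1))
            (by simp [seq] : l ∈ seq (node l B C))) id
      | assocInv k1 l1 A1 B1 C1 => rfl
      | inter v1 k1 a1 b1 A1 B1 C1 D1 hveq =>
          obtain ⟨-, -, hL, -⟩ := hU
          obtain ⟨g1, -, -, -⟩ := hL
          have ha : l < a1 := g1 a1 (by simp [seq])
          have ha' : a1 ≤ l := by rw [hveq]; exact Nat.le_max_left a1 l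
          omega
      | congrL k1 r1 hm =>
          have hmem := lmove_mem hm
          exact absurd (nodup_not_both hnd hmem (by simp [seq] : l ∈ seq (node l B C))) id
      | congrR k1 l1 hm =>
          obtain ⟨-, -, -, hr⟩ := hT
          have := lmove_lt hm hr
          omega
  | inter v k a b A B C D hv =>
      intro u' h' hnd hT hU hU'
      cases h' with
      | assoc k1 l1 A1 B1 C1 =>
          -- here a has been identified with v
          obtain ⟨-, -, -, h4⟩ := hU'
          obtain ⟨-, g2, -, -⟩ := h4
          have hb : v < b := g2 b (by simp [seq])
          have hb' : b ≤ v := by rw [hv]; exact Nat.le_max_right v b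
          omega
      | assocInv k1 l1 A1 B1 C1 =>
          -- here b has been identified with v
          obtain ⟨-, -, hL, -⟩ := hU'
          obtain ⟨g1, -, -, -⟩ := hL
          have ha : v < a := g1 a (by simp [seq])
          have ha' : a ≤ v := by rw [hv]; exact Nat.le_max_left a v
          omega
      | inter v1 k1 a1 b1 A1 B1 C1 D1 hveq => rfl
      | congrL k1 r1 hm =>
          obtain ⟨-, -, hl, -⟩ := hT
          have h1 : a < v := lmove_lt hm hl
          have hvb : v = b := by
            rcases Nat.le_total a b with hab | hab
            · rw [hv, Nat.max_eq_right hab]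
            · rw [hv, Nat.max_eq_left hab] at h1 ⊢; omega
          subst hvb
          have hmem := lmove_mem hm
          exact absurd (nodup_not_both hnd hmem (by simp [seq] : v ∈ seq (node v C D))) id
      | congrR k1 l1 hm =>
          obtain ⟨-, -, -, hr⟩ := hT
          have h1 : b < v := lmove_lt hm hr
          have hva : v = a := by
            rcases Nat.le_total b a with hab | hab
            · rw [hv, Nat.max_eq_left hab]
            · rw [hv, Nat.max_eq_right hab] at h1 ⊢; omega
          subst hva
          have hmem := lmove_mem hm
          exact absurd (nodup_not_both hnd (by simp [seq] : v ∈ seq (node v A B)) hmem) id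
  | congrL k r hm ih =>
      rename_i L L' vv
      intro u' h' hnd hT hU hU'
      cases h' with
      | assoc k1 l1 A1 B1 C1 =>
          obtain ⟨-, -, hl, -⟩ := hT
          have := lmove_lt hm hl
          omega
      | assocInv k1 l1 A1 B1 C1 =>
          have hmem := lmove_mem hm
          exact absurd (nodup_not_both hnd hmem
            (by simp [seq] : vv ∈ seq (node vv B1 C1))) id
      | inter v1 k1 a1 b1 A1 B1 C1 D1 hveq =>
          obtain ⟨-, -, hl, -⟩ := hT
          have h1 : a1 < vv := lmove_lt hm hl
          have hvb : vv = b1 := by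
            rcases Nat.le_total a1 b1 with hab | hab
            · rw [hveq, Nat.max_eq_right hab]
            · rw [hveq, Nat.max_eq_left hab] at h1 ⊢; omega
          subst hvb
          have hmem := lmove_mem hm
          exact absurd (nodup_not_both hnd hmem
            (by simp [seq] : vv ∈ seq (node vv C1 D1))) id
      | congrL k1 r1 hm' =>
          obtain ⟨-, -, hl, -⟩ := hT
          obtain ⟨-, -, hl', -⟩ := hU
          obtain ⟨-, -, hw, -⟩ := hU'
          have hndl : (seq L).Nodup := by
            simp only [seq, List.nodup_append] at hnd
            exact hnd.1
          rw [ih hm' hndl hl hl' hw]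
      | congrR k1 l1 hm' =>
          have hmem := lmove_mem hm
          have hmem' := lmove_mem hm'
          exact absurd (nodup_not_both hnd hmem hmem') id
  | congrR k l hm ih =>
      rename_i R R' vv
      intro u' h' hnd hT hU hU'
      cases h' with
      | assoc k1 l1 A1 B1 C1 =>
          have hmem := lmove_mem hm
          exact absurd (nodup_not_both hnd
            (by simp [seq] : vv ∈ seq (node vv A1 B1)) hmem) id
      | assocInv k1 l1 A1 B1 C1 =>
          obtain ⟨-, -, -, hr⟩ := hT
          have := lmove_lt hm hr
          omega
      | inter v1 k1 a1 b1 A1 B1 C1 D1 hveq =>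
          obtain ⟨-, -, -, hr⟩ := hT
          have h1 : b1 < vv := lmove_lt hm hr
          have hva : vv = a1 := by
            rcases Nat.le_total b1 a1 with hab | hab
            · rw [hveq, Nat.max_eq_left hab]
            · rw [hveq, Nat.max_eq_right hab] at h1 ⊢; omega
          subst hva
          have hmem := lmove_mem hm
          exact absurd (nodup_not_both hnd
            (by simp [seq] : vv ∈ seq (node vv A1 B1)) hmem) id
      | congrL k1 r1 hm' =>
          have hmem := lmove_mem hm
          have hmem' := lmove_mem hm'
          exact absurd (nodup_not_both hnd hmem' hmem) id
      | congrR k1 l1 hm' =>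
          obtain ⟨-, -, -, hr⟩ := hT
          obtain ⟨-, -, -, hr'⟩ := hU
          obtain ⟨-, -, -, hw⟩ := hU'
          have hndr : (seq R).Nodup := by
            simp only [seq, List.nodup_append, List.nodup_cons] at hnd
            exact hnd.2.1.2
          rw [ih hm' hndr hr hr' hw]

end LTree

/-- Every internally resolved binary tree of height `n` is the source of at most
`n - 1` distinct primitive arrows. -/
theorem irb_out_degree (n : ℕ) (t : LTree) (ht : LTree.IsIRB n t) :
    Nat.card {u : LTree // LTree.MoveIRB n t u} ≤ n - 1 := by
  classical
  have hnd : (LTree.seq t).Nodup := ht.1.nodup_iff.2 (List.nodup_range (n := n))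
  have key : ∀ u : {u : LTree // LTree.MoveIRB n t u},
      ∃ v, LTree.LMove v t u.1 ∧ 1 ≤ v ∧ v < n := by
    rintro ⟨u, hm, -, -⟩
    obtain ⟨v, hv⟩ := LTree.move_lmove hm
    have hvn : v < n := List.mem_range.1 (ht.1.mem_iff.1 (LTree.lmove_mem hv))
    have hnode : ∃ k l r, t = LTree.node k l r := by
      cases hv <;> exact ⟨_, _, _, rfl⟩
    obtain ⟨k, l, r, rfl⟩ := hnode
    have := LTree.lmove_lt hv ht.2
    exact ⟨v, hv, by omega, hvn⟩
  choose f hf h1 h2 using key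
  have hinj : Function.Injective
      (fun u : {u : LTree // LTree.MoveIRB n t u} =>
        (⟨f u - 1, by have := h1 u; have := h2 u; omega⟩ : Fin (n - 1))) := by
    intro u u' he
    have hval : f u - 1 = f u' - 1 := congrArg Fin.val he
    have hfe : f u = f u' := by have := h1 u; have := h1 u'; omega
    have h2' := hf u'
    rw [← hfe] at h2'
    exact Subtype.ext
      (LTree.lmove_unique (hf u) h2' hnd ht.2 u.2.2.2.2 u'.2.2.2.2)
  simpa using Nat.card_le_card_of_injective _ hinj
end

section
/- The number T(n) of resolved binary trees of length n equals the tangent number, i.e., T(n) = (d^{2n-1}/dx^{2n-1}) tan(x) evaluated at x=0, so that tan x = \sum_{n\ge 1} T(n) x^{2n-1}/(2n-1)!. Equivalently, T(n) equals the number of up-down (alternating) permutations of 2n-1 numbers. -/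
/-- A list is up-down (alternating): entries in odd-indexed positions are
local maxima, i.e. `a₁ < a₂ > a₃ < a₄ > …` (0-indexed: `l[0] < l[1] > l[2] < …`). -/
def UpDown (l : List ℕ) : Prop :=
  ∀ i : ℕ, (h : i + 1 < l.length) →
    (i % 2 = 0 → l.get ⟨i, Nat.lt_of_succ_lt h⟩ < l.get ⟨i + 1, h⟩) ∧
    (i % 2 = 1 → l.get ⟨i + 1, h⟩ < l.get ⟨i, Nat.lt_of_succ_lt h⟩)

section Analysis
open Real Set Finset


lemma contDiffOn_iteratedDeriv' {s : Set ℝ} (hs : IsOpen s) {f : ℝ → ℝ}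
    (hf : ContDiffOn ℝ (⊤ : ℕ∞) f s) (k : ℕ) : ContDiffOn ℝ (⊤ : ℕ∞) (iteratedDeriv k f) s := by
  induction k generalizing f with
  | zero => simpa using hf
  | succ k ih =>
    rw [iteratedDeriv_succ']
    exact ih (hf.deriv_of_isOpen hs (mod_cast le_top))

lemma diffAt_iteratedDeriv' {s : Set ℝ} (hs : IsOpen s) {f : ℝ → ℝ}
    (hf : ContDiffOn ℝ (⊤ : ℕ∞) f s) (k : ℕ) {x : ℝ} (hx : x ∈ s) :
    DifferentiableAt ℝ (iteratedDeriv k f) x :=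
  ((contDiffOn_iteratedDeriv' hs hf k).differentiableOn (by simp)).differentiableAt (hs.mem_nhds hx)

lemma leibniz_on {s : Set ℝ} (hs : IsOpen s) {f g : ℝ → ℝ}
    (hf : ContDiffOn ℝ (⊤ : ℕ∞) f s) (hg : ContDiffOn ℝ (⊤ : ℕ∞) g s) (n : ℕ) :
    ∀ x ∈ s, iteratedDeriv n (fun y => f y * g y) x
      = ∑ k ∈ Finset.range (n+1), (n.choose k : ℝ) *
          (iteratedDeriv k f x * iteratedDeriv (n-k) g x) := by
  induction n with
  | zero => intro x hx; simp
  | succ n ih =>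
    intro x hx
    have hev : iteratedDeriv n (fun y => f y * g y) =ᶠ[nhds x]
        fun y => ∑ k ∈ Finset.range (n+1), (n.choose k : ℝ) *
          (iteratedDeriv k f y * iteratedDeriv (n-k) g y) := by
      filter_upwards [hs.mem_nhds hx] with y hy using ih y hy
    rw [iteratedDeriv_succ, hev.deriv_eq]
    have hdiff : ∀ k, DifferentiableAt ℝ
        (fun y => iteratedDeriv k f y * iteratedDeriv (n-k) g y) x := fun k =>
      (diffAt_iteratedDeriv' hs hf k hx).mul (diffAt_iteratedDeriv' hs hg (n-k) hx)
    rw [deriv_fun_sum (fun k _ => (hdiff k).const_mul _)]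
    have hterm : ∀ k ∈ Finset.range (n+1),
        deriv (fun y => (n.choose k : ℝ) * (iteratedDeriv k f y * iteratedDeriv (n-k) g y)) x
        = (n.choose k : ℝ) * (iteratedDeriv (k+1) f x * iteratedDeriv (n-k) g x
            + iteratedDeriv k f x * iteratedDeriv (n-k+1) g x) := by
      intro k _
      rw [deriv_const_mul _ (hdiff k),
        deriv_fun_mul (diffAt_iteratedDeriv' hs hf k hx) (diffAt_iteratedDeriv' hs hg (n-k) hx),
        ← iteratedDeriv_succ, ← iteratedDeriv_succ]
    rw [Finset.sum_congr rfl hterm]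
    set a : ℕ → ℝ := fun k => iteratedDeriv k f x with ha
    set b : ℕ → ℝ := fun k => iteratedDeriv k g x with hb
    have h1 : ∑ k ∈ Finset.range (n+1), (n.choose k : ℝ) * (a (k+1) * b (n-k) + a k * b (n-k+1))
        = (∑ k ∈ Finset.range (n+1), (n.choose k : ℝ) * (a (k+1) * b (n+1-(k+1))))
          + ∑ k ∈ Finset.range (n+1), (n.choose k : ℝ) * (a k * b (n+1-k)) := by
      rw [← Finset.sum_add_distrib]
      refine Finset.sum_congr rfl fun k hk => ?_
      have hk' : k ≤ n := Nat.lt_succ_iff.mp (Finset.mem_range.mp hk)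
      have e1 : n + 1 - (k+1) = n - k := by omega
      have e2 : n + 1 - k = n - k + 1 := by omega
      rw [e1, e2]; ring
    rw [h1]
    rw [Finset.sum_range_succ' (fun k => ((n+1).choose k : ℝ) * (a k * b (n+1-k))) (n+1)]
    rw [Finset.sum_range_succ' (fun k => (n.choose k : ℝ) * (a k * b (n+1-k))) n]
    have hsplit : ∀ k : ℕ, (((n+1).choose (k+1) : ℝ)) = (n.choose k : ℝ) + (n.choose (k+1) : ℝ) := by
      intro k; rw [Nat.choose_succ_succ]; push_cast; ring
    have h3 : ∑ k ∈ Finset.range (n+1), ((n+1).choose (k+1) : ℝ) * (a (k+1) * b (n+1-(k+1)))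
        = (∑ k ∈ Finset.range (n+1), (n.choose k : ℝ) * (a (k+1) * b (n+1-(k+1))))
          + ∑ k ∈ Finset.range (n+1), (n.choose (k+1) : ℝ) * (a (k+1) * b (n+1-(k+1))) := by
      rw [← Finset.sum_add_distrib]
      exact Finset.sum_congr rfl fun k _ => by rw [hsplit]; ring
    have h4 : ∑ k ∈ Finset.range (n+1), (n.choose (k+1) : ℝ) * (a (k+1) * b (n+1-(k+1)))
        = ∑ k ∈ Finset.range n, (n.choose (k+1) : ℝ) * (a (k+1) * b (n+1-(k+1))) := by
      rw [Finset.sum_range_succ]; simp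
    rw [h3, h4]
    simp only [Nat.choose_zero_right, Nat.cast_one]
    ring

noncomputable def td (k : ℕ) : ℝ := iteratedDeriv k Real.tan 0

lemma cosSetOpen : IsOpen {x : ℝ | Real.cos x ≠ 0} :=
  isOpen_compl_singleton.preimage Real.continuous_cos

lemma tan_contDiffOn : ContDiffOn ℝ (⊤ : ℕ∞) Real.tan {x : ℝ | Real.cos x ≠ 0} :=
  fun x hx => (Real.contDiffAt_tan.2 hx).contDiffWithinAt

lemma deriv_tan_eqOn : Set.EqOn (deriv Real.tan)
    (fun y => 1 + Real.tan y * Real.tan y) {x : ℝ | Real.cos x ≠ 0} := by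
  intro x hx
  have hx' : Real.cos x ≠ 0 := hx
  show deriv Real.tan x = 1 + Real.tan x * Real.tan x
  rw [Real.deriv_tan, Real.tan_eq_sin_div_cos]
  have h := Real.sin_sq_add_cos_sq x
  field_simp
  nlinarith [h]

lemma td_succ (n : ℕ) (hn : 1 ≤ n) :
    td (n+1) = ∑ k ∈ Finset.range (n+1), (n.choose k : ℝ) * (td k * td (n-k)) := by
  have h0 : (0:ℝ) ∈ {x : ℝ | Real.cos x ≠ 0} := by
    simp [Real.cos_zero]
  have step1 : iteratedDeriv (n+1) Real.tan 0 = iteratedDeriv n (deriv Real.tan) 0 := by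
    rw [iteratedDeriv_succ']
  have step2 : iteratedDeriv n (deriv Real.tan) 0
      = iteratedDeriv n (fun y => 1 + Real.tan y * Real.tan y) 0 :=
    deriv_tan_eqOn.iteratedDeriv_of_isOpen cosSetOpen n h0
  have step3 : iteratedDeriv n (fun y => 1 + Real.tan y * Real.tan y) 0
      = iteratedDeriv n (fun y => Real.tan y * Real.tan y) 0 := by
    rw [← iteratedDerivWithin_univ, ← iteratedDerivWithin_univ]
    exact iteratedDerivWithin_const_add hn _
  have step4 := leibniz_on cosSetOpen tan_contDiffOn tan_contDiffOn n 0 h0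
  simp only [td]
  rw [step1, step2, step3, step4]

lemma td_zero : td 0 = 0 := by simp [td, Real.tan_zero]

lemma td_one : td 1 = 1 := by
  simp [td, iteratedDeriv_one, Real.deriv_tan, Real.cos_zero]


lemma td_even : ∀ m : ℕ, td (2*m) = 0 := by
  intro m
  induction m using Nat.strong_induction_on with
  | _ m ih =>
    match m with
    | 0 => simpa using td_zero
    | (j+1) =>
      have h2 : 2*(j+1) = (2*j+1) + 1 := by ring
      rw [h2, td_succ (2*j+1) (by omega)]
      refine Finset.sum_eq_zero fun k hk => ?_
      have hk' : k ≤ 2*j+1 := by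
        have := Finset.mem_range.mp hk; omega
      rcases Nat.even_or_odd k with he | ho
      · obtain ⟨i, hi⟩ := he
        have : td k = 0 := by
          have : k = 2*i := by omega
          rw [this]; exact ih i (by omega)
        rw [this]; ring
      · obtain ⟨i, hi⟩ := ho
        have he2 : 2*j+1 - k = 2*(j-i) := by omega
        have : td (2*j+1-k) = 0 := by
          rw [he2]; exact ih (j-i) (by omega)
        rw [this]; ring

lemma td_eq_T (T : ℕ → ℕ) (hT1 : T 1 = 1)
    (hTrec : ∀ n : ℕ, 2 ≤ n →
      T n = ∑ m ∈ Finset.Ico 1 n, Nat.choose (2 * n - 2) (2 * m - 1) * (T m * T (n - m))) :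
    ∀ n : ℕ, 1 ≤ n → td (2*n-1) = (T n : ℝ) := by
  intro n
  induction n using Nat.strong_induction_on with
  | _ n ih =>
    intro hn
    rcases eq_or_lt_of_le hn with h1 | h2
    · rw [← h1]; simpa [hT1] using td_one
    · -- n ≥ 2
      have hn2 : 2 ≤ n := h2
      have he : 2*n-1 = (2*n-2) + 1 := by omega
      rw [he, td_succ (2*n-2) (by omega)]
      have he2 : 2*n-2+1 = 2*n-1 := by omega
      rw [he2]
      have hfil : ∑ k ∈ Finset.range (2*n-1), ((2*n-2).choose k : ℝ) * (td k * td (2*n-2-k))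
          = ∑ k ∈ (Finset.range (2*n-1)).filter (fun k => k % 2 = 1),
              ((2*n-2).choose k : ℝ) * (td k * td (2*n-2-k)) := by
        symm
        refine Finset.sum_filter_of_ne fun k hk hne => ?_
        by_contra hodd
        have hkev : k % 2 = 0 := by omega
        obtain ⟨i, hi⟩ : ∃ i, k = 2*i := ⟨k/2, by omega⟩
        exact hne (by rw [hi, td_even]; ring)
      rw [hfil]
      have hbij : ∑ k ∈ (Finset.range (2*n-1)).filter (fun k => k % 2 = 1),
              ((2*n-2).choose k : ℝ) * (td k * td (2*n-2-k))
          = ∑ m ∈ Finset.Ico 1 n, ((2*n-2).choose (2*m-1) : ℝ) * ((T m : ℝ) * (T (n-m) : ℝ)) := by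
        refine Finset.sum_nbij' (fun k => (k+1)/2) (fun m => 2*m-1) ?_ ?_ ?_ ?_ ?_
        · intro k hk
          simp only [Finset.mem_filter, Finset.mem_range] at hk
          simp only [Finset.mem_Ico]
          omega
        · intro m hm
          simp only [Finset.mem_Ico] at hm
          simp only [Finset.mem_filter, Finset.mem_range]
          omega
        · intro k hk
          simp only [Finset.mem_filter, Finset.mem_range] at hk
          show 2*((k+1)/2) - 1 = k
          omega
        · intro m hm
          simp only [Finset.mem_Ico] at hm
          show (2*m-1+1)/2 = m
          omega
        · intro k hk
          simp only [Finset.mem_filter, Finset.mem_range] at hk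
          have hm1 : 1 ≤ (k+1)/2 := by omega
          have hmn : (k+1)/2 < n := by omega
          have e1 : 2*((k+1)/2) - 1 = k := by omega
          have e2 : 2*n-2-k = 2*(n - (k+1)/2) - 1 := by omega
          have hL : td k = (T ((k+1)/2) : ℝ) := by
            have h := ih ((k+1)/2) hmn hm1
            rwa [e1] at h
          have hR : td (2*n-2-k) = (T (n - (k+1)/2) : ℝ) := by
            rw [e2]; exact ih _ (by omega) (by omega)
          show ((2*n-2).choose k : ℝ) * (td k * td (2*n-2-k))
            = ((2*n-2).choose (2*((k+1)/2)-1) : ℝ) * ((T ((k+1)/2) : ℝ) * (T (n-(k+1)/2) : ℝ))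
          rw [hL, hR, e1]
      rw [hbij, hTrec n hn2]
      push_cast
      rfl


end Analysis

section Combinatorics
open Finset

lemma upDown_iff {l : List ℕ} : UpDown l ↔
    ∀ i : ℕ, (h : i + 1 < l.length) →
    (i % 2 = 0 → l[i]'(Nat.lt_of_succ_lt h) < l[i+1]'h) ∧
    (i % 2 = 1 → l[i+1]'h < l[i]'(Nat.lt_of_succ_lt h)) := by
  simp only [UpDown, List.get_eq_getElem]

lemma upDown_map {l : List ℕ} {f : ℕ → ℕ}
    (hf : ∀ a ∈ l, ∀ b ∈ l, a < b → f a < f b) (h : UpDown l) :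
    UpDown (l.map f) := by
  rw [upDown_iff] at h ⊢
  intro i hi
  rw [List.length_map] at hi
  have h1 := h i hi
  have m1 : l[i]'(Nat.lt_of_succ_lt hi) ∈ l := List.getElem_mem _
  have m2 : l[i+1]'hi ∈ l := List.getElem_mem _
  constructor
  · intro hp
    simp only [List.getElem_map]
    exact hf _ m1 _ m2 (h1.1 hp)
  · intro hp
    simp only [List.getElem_map]
    exact hf _ m2 _ m1 (h1.2 hp)

lemma upDown_take {l : List ℕ} (h : UpDown l) (k : ℕ) : UpDown (l.take k) := by
  rw [upDown_iff] at h ⊢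
  intro i hi
  have hlen : (l.take k).length = min k l.length := l.length_take ..
  have hi' : i + 1 < l.length := by omega
  have h1 := h i hi'
  constructor
  · intro hp
    have := h1.1 hp
    simpa [List.getElem_take] using this
  · intro hp
    have := h1.2 hp
    simpa [List.getElem_take] using this

lemma upDown_drop {l : List ℕ} (h : UpDown l) {k : ℕ} (hk : k % 2 = 0) :
    UpDown (l.drop k) := by
  rw [upDown_iff] at h ⊢
  intro i hi
  have hlen : (l.drop k).length = l.length - k := l.length_drop ..
  have hi' : (k + i) + 1 < l.length := by omega
  have h1 := h (k + i) hi'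
  have hpar : (k + i) % 2 = i % 2 := by omega
  constructor
  · intro hp
    have := h1.1 (by omega)
    simpa [List.getElem_drop, Nat.add_assoc] using this
  · intro hp
    have := h1.2 (by omega)
    simpa [List.getElem_drop, Nat.add_assoc] using this


lemma upDown_iff' {l : List ℕ} : UpDown l ↔
    ∀ i : ℕ, i < l.length - 1 →
    (i % 2 = 0 → l.getD i 0 < l.getD (i+1) 0) ∧
    (i % 2 = 1 → l.getD (i+1) 0 < l.getD i 0) := by
  rw [upDown_iff]
  constructor
  · intro h i hi
    have h1 : i + 1 < l.length := by omega
    have h2 := h i h1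
    rwa [List.getD_eq_getElem l 0 (Nat.lt_of_succ_lt h1), List.getD_eq_getElem l 0 h1]
  · intro h i hi
    have h1 : i < l.length - 1 := by omega
    have h2 := h i h1
    rwa [List.getD_eq_getElem l 0 (Nat.lt_of_succ_lt hi), List.getD_eq_getElem l 0 hi] at h2

instance : DecidablePred UpDown := fun l => decidable_of_iff _ upDown_iff'.symm

def udFinset (L : List ℕ) : Finset (List ℕ) := L.permutations'.toFinset.filter UpDown

lemma mem_udFinset {L l : List ℕ} : l ∈ udFinset L ↔ l.Perm L ∧ UpDown l := by
  simp [udFinset, List.mem_permutations']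

def A (k : ℕ) : ℕ := (udFinset (List.range k)).card

lemma A_one : A 1 = 1 := by decide

lemma g1 {l₁ l₂ : List ℕ} {N i : ℕ} (h : i < l₁.length)
    (h' : i < (l₁ ++ N :: l₂).length) : (l₁ ++ N :: l₂)[i] = l₁[i] :=
  List.getElem_append_left h

lemma g2 {l₁ l₂ : List ℕ} {N : ℕ} (h' : l₁.length < (l₁ ++ N :: l₂).length) :
    (l₁ ++ N :: l₂)[l₁.length] = N := by
  rw [List.getElem_append_right (le_refl l₁.length)]
  simp

lemma g3 {l₁ l₂ : List ℕ} {N j : ℕ} (h : j < l₂.length)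
    (h' : l₁.length + 1 + j < (l₁ ++ N :: l₂).length) :
    (l₁ ++ N :: l₂)[l₁.length + 1 + j] = l₂[j] := by
  rw [List.getElem_append_right (by omega : l₁.length ≤ l₁.length + 1 + j)]
  have e : l₁.length + 1 + j - l₁.length = j + 1 := by omega
  simp only [e]
  simp

lemma g1' {l₁ l₂ : List ℕ} {N i : ℕ} (h : i < l₁.length) :
    (l₁ ++ N :: l₂).getD i 0 = l₁.getD i 0 := by
  have h' : i < (l₁ ++ N :: l₂).length := by simp; omega
  rw [List.getD_eq_getElem _ 0 h', List.getD_eq_getElem _ 0 h, g1 h]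

lemma g2' {l₁ l₂ : List ℕ} {N : ℕ} : (l₁ ++ N :: l₂).getD l₁.length 0 = N := by
  have h' : l₁.length < (l₁ ++ N :: l₂).length := by simp
  rw [List.getD_eq_getElem _ 0 h', g2 h']

lemma g3' {l₁ l₂ : List ℕ} {N j : ℕ} (h : j < l₂.length) :
    (l₁ ++ N :: l₂).getD (l₁.length + 1 + j) 0 = l₂.getD j 0 := by
  have h' : l₁.length + 1 + j < (l₁ ++ N :: l₂).length := by simp; omega
  rw [List.getD_eq_getElem _ 0 h', List.getD_eq_getElem _ 0 h, g3 h]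

lemma getD_mem {l : List ℕ} {i : ℕ} (h : i < l.length) : l.getD i 0 ∈ l := by
  rw [List.getD_eq_getElem _ 0 h]; exact List.getElem_mem h

lemma upDown_glue {l₁ l₂ : List ℕ} {N : ℕ} (hodd : l₁.length % 2 = 1)
    (h₁ : UpDown l₁) (h₂ : UpDown l₂)
    (hlt₁ : ∀ a ∈ l₁, a < N) (hlt₂ : ∀ a ∈ l₂, a < N) :
    UpDown (l₁ ++ N :: l₂) := by
  rw [upDown_iff'] at h₁ h₂ ⊢
  set k := l₁.length with hk
  have hlen : (l₁ ++ N :: l₂).length = k + 1 + l₂.length := by simp; omega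
  intro i hi
  rw [hlen] at hi
  rcases lt_trichotomy (i+1) k with hc | hc | hc
  · -- both inside l₁
    have e1 := g1' (l₂ := l₂) (N := N) (show i < k by omega)
    have e2 := g1' (l₂ := l₂) (N := N) (show i + 1 < k by omega)
    rw [e1, e2]
    exact h₁ i (by omega)
  · -- i + 1 = k
    have heven : i % 2 = 0 := by omega
    constructor
    · intro _
      have e1 := g1' (l₂ := l₂) (N := N) (show i < k by omega)
      have e2 : (l₁ ++ N :: l₂).getD (i+1) 0 = N := by rw [hc]; exact g2'
      rw [e1, e2]
      exact hlt₁ _ (getD_mem (by omega))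
    · intro hp; omega
  · -- i ≥ k
    rcases eq_or_lt_of_le (show k ≤ i by omega) with hc2 | hc2
    · -- i = k
      have hoddi : i % 2 = 1 := by omega
      constructor
      · intro hp; omega
      · intro _
        have e1 : (l₁ ++ N :: l₂).getD i 0 = N := by rw [← hc2]; exact g2'
        have hl2 : 0 < l₂.length := by omega
        have e2 : (l₁ ++ N :: l₂).getD (i+1) 0 = l₂.getD 0 0 := by
          have : i + 1 = k + 1 + 0 := by omega
          rw [this]; exact g3' hl2
        rw [e1, e2]
        exact hlt₂ _ (getD_mem hl2)
    · -- i > k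
      obtain ⟨j, rfl⟩ : ∃ j, i = k + 1 + j := ⟨i - k - 1, by omega⟩
      have hj : j + 1 < l₂.length := by omega
      have e1 := g3' (l₁ := l₁) (N := N) (show j < l₂.length by omega)
      have e2 : (l₁ ++ N :: l₂).getD (k+1+j+1) 0 = l₂.getD (j+1) 0 := by
        have : k+1+j+1 = k + 1 + (j+1) := by omega
        rw [this]; exact g3' hj
      rw [e1, e2]
      have hpar : (k+1+j) % 2 = j % 2 := by omega
      have := h₂ j (by omega)
      constructor
      · intro hp; exact this.1 (by omega)
      · intro hp; exact this.2 (by omega)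

lemma card_udFinset_sort (s : Finset ℕ) :
    (udFinset (s.sort (·≤·))).card = A s.card := by
  set L := s.sort (·≤·) with hL
  have hnd : L.Nodup := s.sort_nodup _
  have hsor : L.Pairwise (·<·) := (s.sortedLT_sort).pairwise
  have hlen : L.length = s.card := s.length_sort _
  set σ : ℕ → ℕ := fun x => L.idxOf x with hσ
  set τ : ℕ → ℕ := fun j => L.getD j 0 with hτ
  have hLget : ∀ i j : ℕ, (hi : i < L.length) → (hj : j < L.length) → i < j →
      L[i] < L[j] := by
    intro i j hi hj hij
    exact (List.pairwise_iff_getElem.mp hsor) i j hi hj hij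
  have key1 : ∀ a ∈ L, τ (σ a) = a := by
    intro a ha
    have h1 : L.idxOf a < L.length := List.idxOf_lt_length_iff.2 ha
    simp only [hτ, hσ]
    rw [List.getD_eq_getElem L 0 h1, List.getElem_idxOf h1]
  have key2 : ∀ j < L.length, σ (τ j) = j := by
    intro j hj
    simp only [hτ, hσ]
    rw [List.getD_eq_getElem L 0 hj, List.Nodup.idxOf_getElem hnd j hj]
  have key3 : L.map σ = List.range L.length := by
    apply List.ext_getElem (by simp)
    intro i h1 h2
    simp only [List.getElem_map, List.getElem_range]
    exact List.Nodup.idxOf_getElem hnd i (by simpa using h1)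
  have key4 : (List.range L.length).map τ = L := by
    apply List.ext_getElem (by simp)
    intro i h1 h2
    simp only [List.getElem_map, List.getElem_range, hτ]
    rw [List.getD_eq_getElem L 0 h2]
  have monoσ : ∀ a ∈ L, ∀ b ∈ L, a < b → σ a < σ b := by
    intro a ha b hb hab
    have h1 : σ a < L.length := List.idxOf_lt_length_iff.2 ha
    have h2 : σ b < L.length := List.idxOf_lt_length_iff.2 hb
    rcases lt_trichotomy (σ a) (σ b) with h | h | h
    · exact h
    · exfalso
      have : a = b := by
        have e1 := key1 a ha; have e2 := key1 b hb
        rw [← e1, ← e2, h]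
      omega
    · exfalso
      have := hLget _ _ h2 h1 h
      have e1 : L[σ a] = a := List.getElem_idxOf h1
      have e2 : L[σ b] = b := List.getElem_idxOf h2
      rw [e1, e2] at this
      omega
  have monoτ : ∀ a ∈ List.range L.length, ∀ b ∈ List.range L.length, a < b → τ a < τ b := by
    intro a ha b hb hab
    rw [List.mem_range] at ha hb
    simp only [hτ]
    rw [List.getD_eq_getElem L 0 ha, List.getD_eq_getElem L 0 hb]
    exact hLget _ _ ha hb hab
  rw [A, ← hlen]
  refine Finset.card_nbij' (fun l => l.map σ) (fun r => r.map τ) ?_ ?_ ?_ ?_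
  · intro l hl
    rw [Finset.mem_coe, mem_udFinset] at hl ⊢
    obtain ⟨hp, hud⟩ := hl
    constructor
    · rw [← key3]; exact hp.map σ
    · refine upDown_map (fun a ha b hb hab => ?_) hud
      exact monoσ a (hp.mem_iff.1 ha) b (hp.mem_iff.1 hb) hab
  · intro r hr
    rw [Finset.mem_coe, mem_udFinset] at hr ⊢
    obtain ⟨hp, hud⟩ := hr
    constructor
    · rw [← key4]; exact hp.map τ
    · refine upDown_map (fun a ha b hb hab => ?_) hud
      exact monoτ a (hp.mem_iff.1 ha) b (hp.mem_iff.1 hb) hab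
  · intro l hl
    rw [Finset.mem_coe, mem_udFinset] at hl
    show List.map τ (List.map σ l) = l
    rw [List.map_map]
    refine (List.map_congr_left fun a ha => ?_).trans l.map_id
    exact key1 a (hl.1.mem_iff.1 ha)
  · intro r hr
    rw [Finset.mem_coe, mem_udFinset] at hr
    show List.map σ (List.map τ r) = r
    rw [List.map_map]
    refine (List.map_congr_left fun a ha => ?_).trans r.map_id
    have := hr.1.mem_iff.1 ha
    rw [List.mem_range] at this
    exact key2 a this

lemma glue_mem {n m : ℕ} (hn : 2 ≤ n) {t : Finset ℕ} (hm : m ∈ Finset.Ico 1 n)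
    (ht : t ∈ Finset.powersetCard (2*m-1) (Finset.range (2*n-2)))
    {l₁ l₂ : List ℕ}
    (h₁ : l₁ ∈ udFinset (t.sort (·≤·)))
    (h₂ : l₂ ∈ udFinset (((Finset.range (2*n-2)) \ t).sort (·≤·))) :
    l₁ ++ (2*n-2) :: l₂ ∈ udFinset (List.range (2*n-1)) := by
  rw [Finset.mem_powersetCard] at ht
  rw [Finset.mem_Ico] at hm
  obtain ⟨hsub, hcard⟩ := ht
  rw [mem_udFinset] at h₁ h₂
  obtain ⟨hp₁, hud₁⟩ := h₁
  obtain ⟨hp₂, hud₂⟩ := h₂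
  set N := 2*n-2 with hN
  have hmem₁ : ∀ a, a ∈ l₁ ↔ a ∈ t := by
    intro a; rw [hp₁.mem_iff, Finset.mem_sort]
  have hmem₂ : ∀ a, a ∈ l₂ ↔ (a ∈ Finset.range N \ t) := by
    intro a; rw [hp₂.mem_iff, Finset.mem_sort]
  have hlt₁ : ∀ a ∈ l₁, a < N := by
    intro a ha
    have := hsub ((hmem₁ a).1 ha)
    rwa [Finset.mem_range] at this
  have hlt₂ : ∀ a ∈ l₂, a < N := by
    intro a ha
    have := (hmem₂ a).1 ha
    rw [Finset.mem_sdiff, Finset.mem_range] at this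
    exact this.1
  have hlen₁ : l₁.length = 2*m-1 := by
    rw [hp₁.length_eq, Finset.length_sort, hcard]
  have hnd₁ : l₁.Nodup := hp₁.nodup_iff.2 (t.sort_nodup _)
  have hnd₂ : l₂.Nodup := hp₂.nodup_iff.2 ((Finset.range N \ t).sort_nodup _)
  have hud : UpDown (l₁ ++ N :: l₂) :=
    upDown_glue (by omega) hud₁ hud₂ hlt₁ hlt₂
  rw [mem_udFinset]
  refine ⟨?_, hud⟩
  have hnd : (l₁ ++ N :: l₂).Nodup := by
    rw [List.nodup_append]
    refine ⟨hnd₁, ?_, ?_⟩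
    · rw [List.nodup_cons]
      exact ⟨fun hc => lt_irrefl N (hlt₂ _ hc), hnd₂⟩
    · intro a ha b hb hab; subst hab
      rcases List.mem_cons.1 hb with rfl | hb2
      · exact absurd (hlt₁ _ ha) (lt_irrefl _)
      · have h1 := (hmem₁ a).1 ha
        have h2 := (hmem₂ a).1 hb2
        rw [Finset.mem_sdiff] at h2
        exact h2.2 h1
  rw [List.perm_ext_iff_of_nodup hnd List.nodup_range]
  intro a
  rw [List.mem_append, List.mem_cons, List.mem_range, hmem₁ a, hmem₂ a,
    Finset.mem_sdiff, Finset.mem_range]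
  constructor
  · rintro (h | rfl | ⟨h, _⟩)
    · have := hsub h; rw [Finset.mem_range] at this; omega
    · omega
    · omega
  · intro h
    by_cases hc : a ∈ t
    · exact Or.inl hc
    · by_cases h2 : a = N
      · exact Or.inr (Or.inl h2)
      · exact Or.inr (Or.inr ⟨by omega, hc⟩)

lemma ud_decomp {n : ℕ} (hn : 2 ≤ n) {l : List ℕ}
    (hl : l ∈ udFinset (List.range (2*n-1))) :
    ∃ m ∈ Finset.Ico 1 n, ∃ t ∈ Finset.powersetCard (2*m-1) (Finset.range (2*n-2)),
      l.take (2*m-1) ∈ udFinset (t.sort (·≤·)) ∧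
      l.drop (2*m) ∈ udFinset (((Finset.range (2*n-2)) \ t).sort (·≤·)) ∧
      l = l.take (2*m-1) ++ (2*n-2) :: l.drop (2*m) ∧
      t = (l.take (2*m-1)).toFinset := by
  rw [mem_udFinset] at hl
  obtain ⟨hp, hud⟩ := hl
  set N := 2*n-2 with hN
  have hlen : l.length = 2*n-1 := by rw [hp.length_eq, List.length_range]
  have hnd : l.Nodup := hp.nodup_iff.2 List.nodup_range
  have hmem : ∀ a, a ∈ l ↔ a < 2*n-1 := by
    intro a; rw [hp.mem_iff, List.mem_range]
  have hNmem : N ∈ l := (hmem N).2 (by omega)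
  set i := l.idxOf N with hidef
  have hi : i < l.length := List.idxOf_lt_length_iff.2 hNmem
  have hgi : l.getD i 0 = N := by
    rw [List.getD_eq_getElem _ 0 hi]
    exact List.getElem_idxOf hi
  have hle : ∀ a ∈ l, a ≤ N := by
    intro a ha; have := (hmem a).1 ha; omega
  rw [upDown_iff'] at hud
  have hodd : i % 2 = 1 := by
    by_contra h0
    have h0' : i % 2 = 0 := by omega
    rcases lt_or_eq_of_le (show i + 1 ≤ l.length by omega) with hc | hc
    · have h1 := (hud i (by omega)).1 h0'
      have h2 := hle _ (getD_mem (show i+1 < l.length by omega))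
      omega
    · -- i is the last index
      have hi2 : 2 ≤ i := by omega
      have h1 := (hud (i-1) (by omega)).2 (by omega)
      have e : i - 1 + 1 = i := by omega
      rw [e] at h1
      have h2 := hle _ (getD_mem (show i-1 < l.length by omega))
      omega
  set m := (i+1)/2 with hm
  have him : i = 2*m-1 := by omega
  have him2 : i + 1 = 2*m := by omega
  have hmIco : m ∈ Finset.Ico 1 n := by
    rw [Finset.mem_Ico]
    constructor
    · omega
    · -- i odd, i < 2n-1 → i ≤ 2n-3 → m ≤ n-1
      omega
  set l₁ := l.take i with hl₁
  set l₂ := l.drop (i+1) with hl₂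
  have hdrop : l.drop i = N :: l₂ := by
    rw [List.drop_eq_getElem_cons hi, hl₂]
    congr 1
    exact List.getElem_idxOf hi
  have hsplit : l = l₁ ++ N :: l₂ := by
    rw [hl₁, ← hdrop, List.take_append_drop]
  have hlen₁ : l₁.length = i := by
    rw [hl₁, List.length_take]; omega
  have hnd' : (l₁ ++ N :: l₂).Nodup := hsplit ▸ hnd
  rw [List.nodup_append] at hnd'
  obtain ⟨hnd₁, hndc, hdisj⟩ := hnd'
  rw [List.nodup_cons] at hndc
  obtain ⟨hNl₂, hnd₂⟩ := hndc
  have hNl₁ : N ∉ l₁ := fun hc => (hdisj N hc N List.mem_cons_self rfl)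
  have hsub₁ : ∀ a ∈ l₁, a ∈ l := fun a ha => List.take_subset _ _ ha
  have hsub₂ : ∀ a ∈ l₂, a ∈ l := fun a ha => List.drop_subset _ _ ha
  have hlt₁ : ∀ a ∈ l₁, a < N := by
    intro a ha
    have h1 := hle a (hsub₁ a ha)
    have h2 : a ≠ N := fun hc => hNl₁ (hc ▸ ha)
    omega
  have hlt₂ : ∀ a ∈ l₂, a < N := by
    intro a ha
    have h1 := hle a (hsub₂ a ha)
    have h2 : a ≠ N := fun hc => hNl₂ (hc ▸ ha)
    omega
  set t := l₁.toFinset with ht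
  have htsub : t ⊆ Finset.range N := by
    intro a ha
    rw [List.mem_toFinset] at ha
    rw [Finset.mem_range]
    exact hlt₁ a ha
  have htcard : t.card = 2*m-1 := by
    rw [ht, List.toFinset_card_of_nodup hnd₁, hlen₁, him]
  have htmem : t ∈ Finset.powersetCard (2*m-1) (Finset.range N) :=
    Finset.mem_powersetCard.2 ⟨htsub, htcard⟩
  refine ⟨m, hmIco, t, htmem, ?_, ?_, ?_, ?_⟩
  · -- l₁ ∈ udFinset (t.sort)
    rw [← him, ← hl₁, mem_udFinset]
    constructor
    · rw [List.perm_ext_iff_of_nodup hnd₁ (t.sort_nodup _)]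
      intro a
      rw [Finset.mem_sort, ht, List.mem_toFinset]
    · exact upDown_take (upDown_iff'.2 hud) i
  · -- l₂ ∈ udFinset ((range N \ t).sort)
    rw [← him2, ← hl₂, mem_udFinset]
    constructor
    · rw [List.perm_ext_iff_of_nodup hnd₂ ((Finset.range N \ t).sort_nodup _)]
      intro a
      rw [Finset.mem_sort, Finset.mem_sdiff, Finset.mem_range, ht, List.mem_toFinset]
      constructor
      · intro ha
        refine ⟨hlt₂ a ha, fun hc => hdisj a hc a (List.mem_cons_of_mem _ ha) rfl⟩
      · rintro ⟨haN, hat⟩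
        have : a ∈ l := (hmem a).2 (by omega)
        rw [hsplit, List.mem_append, List.mem_cons] at this
        rcases this with h | h | h
        · exact absurd h hat
        · omega
        · exact h
    · exact upDown_drop (upDown_iff'.2 hud) (by omega : (i+1) % 2 = 0)
  · rw [← him, ← him2, ← hl₁, ← hl₂]; exact hsplit
  · rw [← him, ← hl₁]

lemma glue_indexOf {l₁ l₂ : List ℕ} {N : ℕ} (h : ∀ a ∈ l₁, a < N) :
    (l₁ ++ N :: l₂).idxOf N = l₁.length := by
  induction l₁ with
  | nil => simp
  | cons a l ih =>
    have ha : a ≠ N := by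
      have := h a List.mem_cons_self; omega
    rw [List.cons_append, List.idxOf_cons_ne _ ha]
    rw [ih (fun b hb => h b (List.mem_cons_of_mem _ hb))]
    simp

-- facts about members of an image bucket
lemma bucket_facts {n m : ℕ} (hn : 2 ≤ n) {t : Finset ℕ}
    (ht : t ∈ Finset.powersetCard (2*m-1) (Finset.range (2*n-2)))
    {l : List ℕ}
    (hl : l ∈ ((udFinset (t.sort (·≤·))) ×ˢ
        (udFinset (((Finset.range (2*n-2)) \ t).sort (·≤·)))).image
        (fun p => p.1 ++ (2*n-2) :: p.2)) :
    l.idxOf (2*n-2) = 2*m-1 ∧ t = (l.take (2*m-1)).toFinset := by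
  rw [Finset.mem_image] at hl
  obtain ⟨p, hp, rfl⟩ := hl
  rw [Finset.mem_product] at hp
  obtain ⟨hp1, hp2⟩ := hp
  rw [Finset.mem_powersetCard] at ht
  rw [mem_udFinset] at hp1
  have hlen1 : p.1.length = 2*m-1 := by
    rw [hp1.1.length_eq, Finset.length_sort, ht.2]
  have hmem1 : ∀ a ∈ p.1, a < 2*n-2 := by
    intro a ha
    have := hp1.1.mem_iff.1 ha
    rw [Finset.mem_sort] at this
    have := ht.1 this
    rwa [Finset.mem_range] at this
  constructor
  · rw [glue_indexOf hmem1, hlen1]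
  · rw [List.take_left' hlen1]
    ext a
    rw [List.mem_toFinset, ← hp1.1.mem_iff.symm, Finset.mem_sort]


lemma A_rec {n : ℕ} (hn : 2 ≤ n) :
    A (2*n-1) = ∑ m ∈ Finset.Ico 1 n,
      (2*n-2).choose (2*m-1) * (A (2*m-1) * A (2*(n-m)-1)) := by
  have hset : udFinset (List.range (2*n-1)) = (Finset.Ico 1 n).biUnion (fun m =>
      (Finset.powersetCard (2*m-1) (Finset.range (2*n-2))).biUnion (fun t =>
        ((udFinset (t.sort (·≤·))) ×ˢ
          (udFinset (((Finset.range (2*n-2)) \ t).sort (·≤·)))).image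
          (fun p => p.1 ++ (2*n-2) :: p.2))) := by
    ext l
    constructor
    · intro hl
      obtain ⟨m, hm, t, ht, h1, h2, hsplit, -⟩ := ud_decomp hn hl
      rw [Finset.mem_biUnion]
      refine ⟨m, hm, ?_⟩
      rw [Finset.mem_biUnion]
      refine ⟨t, ht, ?_⟩
      rw [Finset.mem_image]
      exact ⟨(l.take (2*m-1), l.drop (2*m)), Finset.mem_product.2 ⟨h1, h2⟩, hsplit.symm⟩
    · intro hl
      rw [Finset.mem_biUnion] at hl
      obtain ⟨m, hm, hl⟩ := hl
      rw [Finset.mem_biUnion] at hl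
      obtain ⟨t, ht, hl⟩ := hl
      rw [Finset.mem_image] at hl
      obtain ⟨p, hp, rfl⟩ := hl
      rw [Finset.mem_product] at hp
      exact glue_mem hn hm ht hp.1 hp.2
  rw [A, hset]
  rw [Finset.card_biUnion]
  · refine Finset.sum_congr rfl fun m hm => ?_
    rw [Finset.card_biUnion]
    · have hterm : ∀ t ∈ Finset.powersetCard (2*m-1) (Finset.range (2*n-2)),
          (((udFinset (t.sort (·≤·))) ×ˢ
            (udFinset (((Finset.range (2*n-2)) \ t).sort (·≤·)))).image
            (fun p => p.1 ++ (2*n-2) :: p.2)).card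
          = A (2*m-1) * A (2*(n-m)-1) := by
        intro t ht
        rw [Finset.card_image_of_injOn]
        · rw [Finset.card_product, card_udFinset_sort, card_udFinset_sort]
          rw [Finset.mem_powersetCard] at ht
          have hc1 : t.card = 2*m-1 := ht.2
          have hc2 : ((Finset.range (2*n-2)) \ t).card = 2*(n-m)-1 := by
            rw [Finset.card_sdiff_of_subset ht.1, Finset.card_range, hc1]
            rw [Finset.mem_Ico] at hm
            omega
          rw [hc1, hc2]
        · intro p hp q hq heq
          have heq' : p.1 ++ (2*n-2) :: p.2 = q.1 ++ (2*n-2) :: q.2 := heq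
          simp only [Finset.mem_coe, Finset.mem_product, mem_udFinset] at hp hq
          rw [Finset.mem_powersetCard] at ht
          have hlp : p.1.length = 2*m-1 := by
            rw [hp.1.1.length_eq, Finset.length_sort, ht.2]
          have hlq : q.1.length = 2*m-1 := by
            rw [hq.1.1.length_eq, Finset.length_sort, ht.2]
          have h1 : p.1 = q.1 := by
            have e1 : (p.1 ++ (2*n-2) :: p.2).take (2*m-1) = p.1 := List.take_left' hlp
            have e2 : (q.1 ++ (2*n-2) :: q.2).take (2*m-1) = q.1 := List.take_left' hlq
            rw [← e1, ← e2, heq']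
          have h2 : p.2 = q.2 := by
            have e1 : (p.1 ++ (2*n-2) :: p.2).drop (2*m-1) = (2*n-2) :: p.2 :=
              List.drop_left' hlp
            have e2 : (q.1 ++ (2*n-2) :: q.2).drop (2*m-1) = (2*n-2) :: q.2 :=
              List.drop_left' hlq
            have := e1.symm.trans (by rw [heq', e2])
            exact List.tail_eq_of_cons_eq this
          exact Prod.ext h1 h2
      rw [Finset.sum_congr rfl hterm, Finset.sum_const, Finset.card_powersetCard,
        Finset.card_range, smul_eq_mul]
    · -- inner disjointness over t
      intro t ht t' ht' htt'
      rw [Function.onFun, Finset.disjoint_left]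
      intro l hl hl'
      have f1 := (bucket_facts hn ht hl).2
      have f2 := (bucket_facts hn ht' hl').2
      exact htt' (f1.trans f2.symm)
  · -- outer disjointness over m
    intro m hm m' hm' hmm'
    rw [Function.onFun, Finset.disjoint_left]
    intro l hl hl'
    rw [Finset.mem_biUnion] at hl hl'
    obtain ⟨t, ht, hl⟩ := hl
    obtain ⟨t', ht', hl'⟩ := hl'
    have f1 := (bucket_facts hn ht hl).1
    have f2 := (bucket_facts hn ht' hl').1
    rw [Finset.mem_coe, Finset.mem_Ico] at hm hm'
    have : 2*m-1 = 2*m'-1 := f1.symm.trans f2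
    exact hmm' (by omega)


lemma A_eq_T (T : ℕ → ℕ) (hT1 : T 1 = 1)
    (hTrec : ∀ n : ℕ, 2 ≤ n →
      T n = ∑ m ∈ Finset.Ico 1 n, Nat.choose (2 * n - 2) (2 * m - 1) * (T m * T (n - m))) :
    ∀ n : ℕ, 1 ≤ n → A (2*n-1) = T n := by
  intro n
  induction n using Nat.strong_induction_on with
  | _ n ih =>
    intro hn
    rcases eq_or_lt_of_le hn with h1 | h2
    · rw [← h1, hT1]; exact A_one
    · have hn2 : 2 ≤ n := h2
      rw [A_rec hn2, hTrec n hn2]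
      refine Finset.sum_congr rfl fun m hm => ?_
      rw [Finset.mem_Ico] at hm
      rw [ih m (by omega) (by omega), ih (n-m) (by omega) (by omega)]

lemma natcard_eq_A (K : ℕ) :
    Nat.card {l : List ℕ // l.Perm (List.range K) ∧ UpDown l} = A K := by
  have e : {l : List ℕ // l.Perm (List.range K) ∧ UpDown l} ≃
      {l : List ℕ // l ∈ udFinset (List.range K)} :=
    Equiv.subtypeEquivRight fun l => mem_udFinset.symm
  rw [Nat.card_congr e]
  exact Nat.card_eq_finsetCard _

end Combinatorics

/-- If `T` satisfies the recursion `T(1) = 1`,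
`T(n) = ∑_{m=1}^{n-1} C(2n-2, 2m-1) T(m) T(n-m)` (which counts resolved binary
trees of length `n`), then `T(n)` is the tangent number: it equals the
`(2n-1)`-st derivative of `tan` at `0`, and equals the number of up-down
(alternating) permutations of `2n - 1` numbers. -/
theorem rb_count_eq_tangent_number (T : ℕ → ℕ) (hT1 : T 1 = 1)
    (hTrec : ∀ n : ℕ, 2 ≤ n →
      T n = ∑ m ∈ Finset.Ico 1 n, Nat.choose (2 * n - 2) (2 * m - 1) * (T m * T (n - m))) :
    ∀ n : ℕ, 1 ≤ n →
      iteratedDeriv (2 * n - 1) Real.tan 0 = (T n : ℝ) ∧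
      Nat.card {l : List ℕ // l.Perm (List.range (2 * n - 1)) ∧ UpDown l} = T n := by
  intro n hn
  constructor
  · exact td_eq_T T hT1 hTrec n hn
  · rw [natcard_eq_A]
    exact A_eq_T T hT1 hTrec n hn
end

section
/- Every resolved binary tree of length n is the source of at most 2(n-1) distinct primitive arrows. -/
/-- A planar binary tree in which every node (leaf or internal) carries a level. -/
inductive RTree : Type
  | leaf (lvl : ℕ) : RTree
  | node (lvl : ℕ) (l r : RTree) : RTree

namespace RTree

/-- Left-to-right sequence of the levels of all nodes (infix traversal). -/
def seq : RTree → List ℕ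
  | leaf k => [k]
  | node k l r => seq l ++ k :: seq r

/-- Left-to-right sequence of the levels of the internal (branch) nodes. -/
def branchSeq : RTree → List ℕ
  | leaf _ => []
  | node k l r => branchSeq l ++ k :: branchSeq r

/-- Left-to-right sequence of the leaf levels. -/
def leafSeq : RTree → List ℕ
  | leaf k => [k]
  | node _ l r => leafSeq l ++ leafSeq r

/-- Number of leaves. -/
def leafCount : RTree → ℕ
  | leaf _ => 1
  | node _ l r => leafCount l + leafCount r

/-- Every node lies at a strictly lower level than all nodes of its subtrees. -/
def LevelValid : RTree → Prop
  | leaf _ => True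
  | node k l r => (∀ m ∈ seq l, k < m) ∧ (∀ m ∈ seq r, k < m) ∧ LevelValid l ∧ LevelValid r

/-- A resolved binary tree (RB tree) of length `n`: `n` leaves, the `2n - 1`
nodes carry the distinct levels `0, …, 2n - 2` (so the root is at level `0`),
and every internal node lies below both of its children. -/
def IsRB (n : ℕ) (t : RTree) : Prop :=
  leafCount t = n ∧ (seq t).Perm (List.range (2 * n - 1)) ∧ LevelValid t

/-- The level of the root of a tree. -/
def rootLvl : RTree → ℕ
  | leaf k => k
  | node k _ _ => k

/-- Replace the level of the root. -/
def setLvl (m : ℕ) : RTree → RTree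
  | leaf _ => leaf m
  | node _ l r => node m l r

/-- Primitive moves on RB trees: reattachment of an edge about a pivot
(associativity, both directions) and interchange of the levels of the two
children of a common internal node, applied anywhere in the tree. -/
inductive Move : RTree → RTree → Prop
  | assoc (k l : ℕ) (A B C : RTree) :
      Move (node k (node l A B) C) (node k A (node l B C))
  | assocInv (k l : ℕ) (A B C : RTree) :
      Move (node k A (node l B C)) (node k (node l A B) C)
  | interchange (k : ℕ) (x y : RTree) :
      Move (node k x y) (node k (setLvl (rootLvl y) x) (setLvl (rootLvl x) y))
  | congrL (k : ℕ) {l l' : RTree} (r : RTree) : Move l l' → Move (node k l r) (node k l' r)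
  | congrR (k : ℕ) (l : RTree) {r r' : RTree} : Move r r' → Move (node k l r) (node k l r')

/-- A primitive arrow of the groupoid `RBTree`. -/
def MoveRB (n : ℕ) (s t : RTree) : Prop := Move s t ∧ IsRB n s ∧ IsRB n t

end RTree

deriving instance DecidableEq for RTree

namespace RTree

lemma rootLvl_mem_seq (t : RTree) : rootLvl t ∈ seq t := by
  cases t <;> simp [rootLvl, seq]

lemma one_le_leafCount (t : RTree) : 1 ≤ leafCount t := by
  induction t <;> simp [leafCount] <;> omega

/-- Candidate root-reattachment in one direction. -/
def assocT (k : ℕ) : RTree → RTree → List RTree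
  | node a A B, r => if a < rootLvl r then [node k A (node a B r)] else []
  | leaf _, _ => []

/-- Candidate root-reattachment in the other direction. -/
def assocInvT (k : ℕ) : RTree → RTree → List RTree
  | l, node b C D => if b < rootLvl l then [node k (node b l C) D] else []
  | _, leaf _ => []

/-- Candidate targets of moves applied at the root that could be level-valid. -/
def rootTargets (k : ℕ) (l r : RTree) : List RTree :=
  assocT k l r ++ assocInvT k l r ++
    [node k (setLvl (rootLvl r) l) (setLvl (rootLvl l) r)]

lemma rootTargets_length (k : ℕ) (l r : RTree) : (rootTargets k l r).length ≤ 2 := by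
  have h : (assocT k l r).length + (assocInvT k l r).length ≤ 1 := by
    cases l with
    | leaf a => cases r <;> simp [assocT, assocInvT] <;> split <;> simp
    | node a A B => cases r with
      | leaf b => simp [assocT, assocInvT]; split <;> simp
      | node b C D =>
        simp only [assocT, assocInvT, rootLvl]
        by_cases h1 : a < b <;> by_cases h2 : b < a <;> simp [h1, h2] <;> omega
  simp only [rootTargets, List.length_append, List.length_singleton]
  omega

/-- All candidate targets of primitive moves with a chance of being level-valid. -/
def targets : RTree → List RTree
  | leaf _ => []
  | node k l r =>
      (targets l).map (fun l' => node k l' r) ++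
      (targets r).map (fun r' => node k l r') ++ rootTargets k l r

lemma targets_length (t : RTree) : (targets t).length ≤ 2 * (leafCount t - 1) := by
  induction t with
  | leaf k => simp [targets, leafCount]
  | node k l r ihl ihr =>
    have hl := one_le_leafCount l
    have hr := one_le_leafCount r
    have hroot := rootTargets_length k l r
    simp only [targets, List.length_append, List.length_map, leafCount]
    omega

lemma move_complete {t u : RTree} (h : Move t u) (hu : LevelValid u) : u ∈ targets t := by
  induction h with
  | assoc k a A B C =>
    obtain ⟨h1, h2, h3, h4⟩ := hu
    have ha : a < rootLvl C := h4.2.1 _ (rootLvl_mem_seq C)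
    apply List.mem_append_right
    apply List.mem_append_left
    apply List.mem_append_left
    simp [assocT, ha]
  | assocInv k b A B C =>
    obtain ⟨h1, h2, h3, h4⟩ := hu
    have hb : b < rootLvl A := h3.1 _ (rootLvl_mem_seq A)
    apply List.mem_append_right
    apply List.mem_append_left
    apply List.mem_append_right
    simp [assocInvT, hb]
  | interchange k x y =>
    apply List.mem_append_right
    apply List.mem_append_right
    simp [rootTargets]
  | congrL k r hm ih =>
    obtain ⟨h1, h2, h3, h4⟩ := hu
    exact List.mem_append_left _ (List.mem_append_left _ (List.mem_map_of_mem (ih h3)))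
  | congrR k l hm ih =>
    obtain ⟨h1, h2, h3, h4⟩ := hu
    exact List.mem_append_left _ (List.mem_append_right _ (List.mem_map_of_mem (ih h4)))

end RTree

/-- Every resolved binary tree of length `n` is the source of at most
`2(n-1)` distinct primitive arrows. -/
theorem rb_out_degree (n : ℕ) (t : RTree) (ht : RTree.IsRB n t) :
    Nat.card {u : RTree // RTree.MoveRB n t u} ≤ 2 * (n - 1) := by
  classical
  have hsub : {u : RTree | RTree.MoveRB n t u} ⊆ ((RTree.targets t).toFinset : Set RTree) := by
    intro u hu
    obtain ⟨hm, _, _, _, hval⟩ := hu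
    simp only [List.coe_toFinset, Set.mem_setOf_eq]
    exact RTree.move_complete hm hval
  calc Nat.card {u : RTree // RTree.MoveRB n t u}
      = Set.ncard {u : RTree | RTree.MoveRB n t u} := rfl
    _ ≤ Set.ncard ((RTree.targets t).toFinset : Set RTree) :=
        Set.ncard_le_ncard hsub (Set.toFinite _)
    _ = (RTree.targets t).toFinset.card := Set.ncard_coe_finset _
    _ ≤ (RTree.targets t).length := List.toFinset_card_le _
    _ ≤ 2 * (RTree.leafCount t - 1) := RTree.targets_length t
    _ = 2 * (n - 1) := by rw [ht.1]
end

section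
/- There are exactly n! (n-1)! reduced resolved binary trees of length n. -/
namespace RTree

/-- A reduced resolved binary tree (RRB tree) of length `n`: an RB tree in
which every branch level is below every leaf level. -/
def IsRRB (n : ℕ) (t : RTree) : Prop :=
  IsRB n t ∧ ∀ b ∈ branchSeq t, ∀ l ∈ leafSeq t, b < l

/-- Primitive moves on RRB trees: edge reattachment, interchange of the levels
of two sibling branches, and interchange of the levels of two sibling leaves. -/
inductive RMove : RTree → RTree → Prop
  | assoc (k l : ℕ) (A B C : RTree) :
      RMove (node k (node l A B) C) (node k A (node l B C))
  | assocInv (k l : ℕ) (A B C : RTree) :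
      RMove (node k A (node l B C)) (node k (node l A B) C)
  | swapBranch (k a b : ℕ) (A B C D : RTree) :
      RMove (node k (node a A B) (node b C D)) (node k (node b A B) (node a C D))
  | swapLeaf (k a b : ℕ) :
      RMove (node k (leaf a) (leaf b)) (node k (leaf b) (leaf a))
  | congrL (k : ℕ) {l l' : RTree} (r : RTree) : RMove l l' → RMove (node k l r) (node k l' r)
  | congrR (k : ℕ) (l : RTree) {r r' : RTree} : RMove r r' → RMove (node k l r) (node k l r')

/-- A primitive arrow of the groupoid `RRBTree`. -/
def MoveRRB (n : ℕ) (s t : RTree) : Prop := RMove s t ∧ IsRRB n s ∧ IsRRB n t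

end RTree

namespace RTree


lemma mem_seq {m : ℕ} : ∀ t : RTree, m ∈ seq t ↔ m ∈ branchSeq t ∨ m ∈ leafSeq t
  | leaf k => by simp [seq, branchSeq, leafSeq]
  | node k l r => by
      simp [seq, branchSeq, leafSeq, mem_seq l, mem_seq r]
      tauto

lemma seq_perm : ∀ t : RTree, (seq t).Perm (branchSeq t ++ leafSeq t)
  | leaf k => by simp [seq, branchSeq, leafSeq]
  | node k l r => by
      rw [List.perm_iff_count]
      intro a
      have h1 := List.perm_iff_count.mp (seq_perm l) a
      have h2 := List.perm_iff_count.mp (seq_perm r) a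
      simp only [seq, branchSeq, leafSeq, List.count_append, List.count_cons] at *
      omega

lemma length_leafSeq : ∀ t : RTree, (leafSeq t).length = leafCount t
  | leaf _ => rfl
  | node _ l r => by
      simp [leafSeq, leafCount, length_leafSeq l, length_leafSeq r]

lemma length_branchSeq : ∀ t : RTree, (branchSeq t).length + 1 = leafCount t
  | leaf _ => rfl
  | node _ l r => by
      have h1 := length_branchSeq l
      have h2 := length_branchSeq r
      simp [branchSeq, leafCount] at *
      omega


lemma takeWhile_append_cons (w x : List ℕ) (a : ℕ) (hw : a ∉ w) :
    (w ++ a :: x).takeWhile (fun m => m ≠ a) = w := by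
  induction w with
  | nil => simp [List.takeWhile_cons]
  | cons c w ih =>
      have hc : c ≠ a := fun h => hw (by simp [h])
      have hw' : a ∉ w := fun h => hw (by simp [h])
      simp only [ne_eq, decide_not] at ih ⊢
      simp [List.takeWhile_cons, hc, ih hw']

lemma append_cons_eq {a b : ℕ} {w x y z : List ℕ}
    (h : w ++ a :: x = y ++ b :: z)
    (ha : ∀ m ∈ w, a < m) (ha' : ∀ m ∈ x, a < m)
    (hb : ∀ m ∈ y, b < m) (hb' : ∀ m ∈ z, b < m) :
    w = y ∧ a = b ∧ x = z := by
  have hab : a = b := by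
    have h1 : a ∈ y ++ b :: z := by rw [← h]; simp
    have h2 : b ∈ w ++ a :: x := by rw [h]; simp
    have k1 : b < a ∨ a = b := by
      rcases List.mem_append.mp h1 with h1 | h1
      · exact Or.inl (hb _ h1)
      · rcases List.mem_cons.mp h1 with h1 | h1
        · exact Or.inr h1
        · exact Or.inl (hb' _ h1)
    have k2 : a < b ∨ b = a := by
      rcases List.mem_append.mp h2 with h2 | h2
      · exact Or.inl (ha _ h2)
      · rcases List.mem_cons.mp h2 with h2 | h2
        · exact Or.inr h2
        · exact Or.inl (ha' _ h2)
    omega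
  subst hab
  have hw : a ∉ w := fun hm => lt_irrefl a (ha a hm)
  have hy : a ∉ y := fun hm => lt_irrefl a (hb a hm)
  have e1 := takeWhile_append_cons w x a hw
  have e2 := takeWhile_append_cons y z a hy
  have hwy : w = y := by rw [← e1, ← e2, h]
  subst hwy
  have := List.append_cancel_left h
  simp only [List.cons.injEq] at this
  exact ⟨rfl, rfl, this.2⟩


lemma eq_of_seqs : ∀ t₁ t₂ : RTree, LevelValid t₁ → LevelValid t₂ →
    branchSeq t₁ = branchSeq t₂ → leafSeq t₁ = leafSeq t₂ → t₁ = t₂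
  | leaf a, leaf b, _, _, _, hl => by
      simp only [leafSeq, List.cons.injEq] at hl
      rw [hl.1]
  | leaf a, node k l r, _, _, hb, _ => by
      exfalso
      have := congrArg List.length hb
      simp [branchSeq] at this
  | node k l r, leaf a, _, _, hb, _ => by
      exfalso
      have := congrArg List.length hb
      simp [branchSeq] at this
  | node k₁ l₁ r₁, node k₂ l₂ r₂, hv₁, hv₂, hb, hl => by
      obtain ⟨hs₁, hs₁', hvl₁, hvr₁⟩ := hv₁
      obtain ⟨hs₂, hs₂', hvl₂, hvr₂⟩ := hv₂
      simp only [branchSeq] at hb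
      simp only [leafSeq] at hl
      have hb₁ : ∀ m ∈ branchSeq l₁, k₁ < m :=
        fun m hm => hs₁ m ((mem_seq l₁).mpr (Or.inl hm))
      have hb₁' : ∀ m ∈ branchSeq r₁, k₁ < m :=
        fun m hm => hs₁' m ((mem_seq r₁).mpr (Or.inl hm))
      have hb₂ : ∀ m ∈ branchSeq l₂, k₂ < m :=
        fun m hm => hs₂ m ((mem_seq l₂).mpr (Or.inl hm))
      have hb₂' : ∀ m ∈ branchSeq r₂, k₂ < m :=
        fun m hm => hs₂' m ((mem_seq r₂).mpr (Or.inl hm))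
      obtain ⟨hw, hk, hx⟩ := append_cons_eq hb hb₁ hb₁' hb₂ hb₂'
      have hlen : (leafSeq l₁).length = (leafSeq l₂).length := by
        have e1 := length_branchSeq l₁
        have e2 := length_branchSeq l₂
        have e3 := length_leafSeq l₁
        have e4 := length_leafSeq l₂
        have e5 : (branchSeq l₁).length = (branchSeq l₂).length := by rw [hw]
        omega
      obtain ⟨hll, hlr⟩ := List.append_inj hl hlen
      rw [eq_of_seqs l₁ l₂ hvl₁ hvl₂ hw hll, eq_of_seqs r₁ r₂ hvr₁ hvr₂ hx hlr, hk]

lemma foldr_min_le : ∀ (l : List ℕ) (a x : ℕ), x ∈ l → l.foldr min a ≤ x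
  | b :: l, a, x, hx => by
      rcases List.mem_cons.mp hx with rfl | hx
      · exact min_le_left _ _
      · exact le_trans (min_le_right _ _) (foldr_min_le l a x hx)

lemma foldr_min_mem : ∀ (l : List ℕ) (a : ℕ), l.foldr min a = a ∨ l.foldr min a ∈ l
  | [], a => Or.inl rfl
  | b :: l, a => by
      rcases min_choice b (l.foldr min a) with h | h
      · right; rw [List.foldr_cons, h]; exact List.mem_cons_self
      · rcases foldr_min_mem l a with h' | h'
        · left; rw [List.foldr_cons, h, h']
        · right; rw [List.foldr_cons, h]; exact List.mem_cons_of_mem _ h'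

def buildAux : ℕ → List ℕ → List ℕ → RTree
  | 0, _, ms => .leaf ms.headI
  | _+1, [], ms => .leaf ms.headI
  | fuel+1, b :: bs, ms =>
      .node ((b :: bs).foldr min b)
        (buildAux fuel ((b :: bs).take ((b :: bs).idxOf ((b :: bs).foldr min b)))
                       (ms.take ((b :: bs).idxOf ((b :: bs).foldr min b) + 1)))
        (buildAux fuel ((b :: bs).drop ((b :: bs).idxOf ((b :: bs).foldr min b) + 1))
                       (ms.drop ((b :: bs).idxOf ((b :: bs).foldr min b) + 1)))

lemma buildAux_spec : ∀ fuel (bs ms : List ℕ), bs.length ≤ fuel → bs.Nodup →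
    ms.length = bs.length + 1 → (∀ b ∈ bs, ∀ m ∈ ms, b < m) →
    branchSeq (buildAux fuel bs ms) = bs ∧ leafSeq (buildAux fuel bs ms) = ms ∧
      LevelValid (buildAux fuel bs ms) := by
  intro fuel
  induction fuel with
  | zero =>
      intro bs ms hlen _ hms _
      have hbs : bs = [] := List.length_eq_zero_iff.mp (Nat.le_zero.mp hlen)
      subst hbs
      obtain ⟨m, rfl⟩ := List.length_eq_one_iff.mp (by simpa using hms)
      simp [buildAux, branchSeq, leafSeq, LevelValid]
  | succ fuel ih =>
      intro bs ms hlen hnd hms hcross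
      cases bs with
      | nil =>
          obtain ⟨m, rfl⟩ := List.length_eq_one_iff.mp (by simpa using hms)
          simp [buildAux, branchSeq, leafSeq, LevelValid]
      | cons b bs' =>
          simp only [buildAux]
          have hkmem : (b :: bs').foldr min b ∈ b :: bs' := by
            rcases foldr_min_mem (b :: bs') b with h | h
            · rw [h]; exact List.mem_cons_self
            · exact h
          have hkle : ∀ x ∈ b :: bs', (b :: bs').foldr min b ≤ x :=
            fun x hx => foldr_min_le _ _ _ hx
          set k := (b :: bs').foldr min b with hkdef
          have hilt : (b :: bs').idxOf k < (b :: bs').length :=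
            List.idxOf_lt_length_iff.mpr hkmem
          have hgi : (b :: bs')[(b :: bs').idxOf k] = k := List.getElem_idxOf hilt
          set i := (b :: bs').idxOf k with hidef
          have hsplit : (b :: bs').take i ++ k :: (b :: bs').drop (i+1) = b :: bs' := by
            conv_rhs => rw [← List.take_append_drop i (b :: bs')]
            rw [List.drop_eq_getElem_cons hilt, hgi]
          have hnd' := hnd
          rw [← hsplit, List.nodup_append] at hnd'
          obtain ⟨ndT, ndC, disj⟩ := hnd'
          rw [List.nodup_cons] at ndC
          obtain ⟨hkD, ndD⟩ := ndC
          have hkT : k ∉ (b :: bs').take i :=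
            fun hm => disj k hm k (List.mem_cons_self) rfl
          have hstrict : ∀ x, (x ∈ (b :: bs').take i ∨ x ∈ (b :: bs').drop (i+1)) → k < x := by
            intro x hx
            have hxmem : x ∈ b :: bs' := by
              rw [← hsplit]
              rcases hx with hx | hx
              · exact List.mem_append_left _ hx
              · exact List.mem_append_right _ (List.mem_cons_of_mem _ hx)
            have hle := hkle x hxmem
            rcases eq_or_lt_of_le hle with heq | hlt
            · exfalso
              rcases hx with hx | hx
              · exact hkT (heq ▸ hx)
              · exact hkD (heq ▸ hx)
            · exact hlt
          have l1 : ((b :: bs').take i).length = i := by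
            rw [List.length_take]; omega
          have l2 : (ms.take (i+1)).length = i + 1 := by
            rw [List.length_take]; omega
          have l3 : ((b :: bs').drop (i+1)).length = (b :: bs').length - (i+1) :=
            List.length_drop
          have l4 : (ms.drop (i+1)).length = ((b :: bs').drop (i+1)).length + 1 := by
            rw [List.length_drop, l3]; omega
          have crossL : ∀ x ∈ (b :: bs').take i, ∀ m ∈ ms.take (i+1), x < m :=
            fun x hx m hm => hcross x (List.mem_of_mem_take hx) m (List.mem_of_mem_take hm)
          have crossR : ∀ x ∈ (b :: bs').drop (i+1), ∀ m ∈ ms.drop (i+1), x < m :=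
            fun x hx m hm => hcross x (List.mem_of_mem_drop hx) m (List.mem_of_mem_drop hm)
          obtain ⟨hB1, hL1, hV1⟩ := ih ((b :: bs').take i) (ms.take (i+1))
            (by omega) ndT (by rw [l2, l1]) crossL
          obtain ⟨hB2, hL2, hV2⟩ := ih ((b :: bs').drop (i+1)) (ms.drop (i+1))
            (by omega) ndD l4 crossR
          refine ⟨?_, ?_, ?_⟩
          · simp only [branchSeq, hB1, hB2, hsplit]
          · simp only [leafSeq, hL1, hL2, List.take_append_drop]
          · refine ⟨?_, ?_, hV1, hV2⟩
            · intro m hm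
              rw [mem_seq] at hm
              rcases hm with hm | hm
              · exact hstrict m (Or.inl (hB1 ▸ hm))
              · exact hcross k hkmem m (List.mem_of_mem_take (hL1 ▸ hm))
            · intro m hm
              rw [mem_seq] at hm
              rcases hm with hm | hm
              · exact hstrict m (Or.inr (hB2 ▸ hm))
              · exact hcross k hkmem m (List.mem_of_mem_drop (hL2 ▸ hm))

lemma range_split (n : ℕ) (hn : 1 ≤ n) :
    List.range (2*n-1) = List.range (n-1) ++ (List.range n).map (fun x => n - 1 + x) := by
  have h : 2*n-1 = (n-1) + n := by omega
  rw [h, List.range_add]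

lemma isRRB_lists {n : ℕ} (hn : 1 ≤ n) {t : RTree} (h : IsRRB n t) :
    (branchSeq t).Perm (List.range (n-1)) ∧
      (leafSeq t).Perm ((List.range n).map (fun x => n - 1 + x)) := by
  obtain ⟨⟨hc, hperm, hval⟩, hcross⟩ := h
  have hBL : (branchSeq t ++ leafSeq t).Perm (List.range (2*n-1)) :=
    (seq_perm t).symm.trans hperm
  have hnd : (branchSeq t ++ leafSeq t).Nodup := hBL.symm.nodup (List.nodup_range)
  rw [List.nodup_append] at hnd
  obtain ⟨hndB, hndL, _⟩ := hnd
  have hlenL : (leafSeq t).length = n := (length_leafSeq t).trans hc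
  have hlenB : (branchSeq t).length = n - 1 := by
    have := length_branchSeq t
    omega
  have hLmem : ∀ l ∈ leafSeq t, n - 1 ≤ l ∧ l < 2*n - 1 := by
    intro l hl
    constructor
    · have hsub : (branchSeq t).toFinset ⊆ Finset.range l := by
        intro b hb
        rw [List.mem_toFinset] at hb
        rw [Finset.mem_range]
        exact hcross b hb l hl
      have hcard := Finset.card_le_card hsub
      rwa [List.toFinset_card_of_nodup hndB, Finset.card_range, hlenB] at hcard
    · have : l ∈ List.range (2*n-1) :=
        hBL.mem_iff.mp (List.mem_append_right _ hl)
      exact List.mem_range.mp this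
  have hMnd : ((List.range n).map (fun x => n - 1 + x)).Nodup :=
    (@List.nodup_range n).map (fun x y h => by omega)
  have hMlen : ((List.range n).map (fun x => n - 1 + x)).length = n := by simp
  have hLsub : leafSeq t ⊆ (List.range n).map (fun x => n - 1 + x) := by
    intro l hl
    obtain ⟨h1, h2⟩ := hLmem l hl
    rw [List.mem_map]
    exact ⟨l - (n-1), List.mem_range.mpr (by omega), by omega⟩
  have hLperm : (leafSeq t).Perm ((List.range n).map (fun x => n - 1 + x)) :=
    (hndL.subperm hLsub).perm_of_length_le (by rw [hMlen, hlenL])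
  refine ⟨?_, hLperm⟩
  rw [List.perm_iff_count]
  intro a
  have c1 := List.perm_iff_count.mp hBL a
  have c2 := List.perm_iff_count.mp hLperm a
  rw [range_split n hn] at c1
  simp only [List.count_append] at c1
  omega

lemma card_perm (L : List ℕ) (h : L.Nodup) :
    Nat.card {l : List ℕ // l.Perm L} = L.length.factorial := by
  have e : {l : List ℕ // l.Perm L} ≃ {l // l ∈ L.permutations.toFinset} :=
    Equiv.subtypeEquivRight (by simp [List.mem_permutations])
  rw [Nat.card_congr e, Nat.card_eq_finsetCard,
    List.toFinset_card_of_nodup (List.nodup_permutations L h), List.length_permutations]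

end RTree

/-- There are exactly `n! (n-1)!` reduced resolved binary trees of length `n`. -/
theorem rrb_card (n : ℕ) (hn : 1 ≤ n) :
    Nat.card {t : RTree // RTree.IsRRB n t} = n.factorial * (n - 1).factorial := by
  classical
  have hAnd : (List.range (n-1)).Nodup := List.nodup_range
  have hMnd : ((List.range n).map (fun x => n - 1 + x)).Nodup :=
    (@List.nodup_range n).map (fun x y h => by omega)
  have key : Nat.card {t : RTree // RTree.IsRRB n t} =
      Nat.card {p : List ℕ × List ℕ //
        p.1.Perm (List.range (n-1)) ∧ p.2.Perm ((List.range n).map (fun x => n - 1 + x))} := by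
    apply Nat.card_eq_of_bijective
      (f := fun t => ⟨(RTree.branchSeq t.1, RTree.leafSeq t.1),
        (RTree.isRRB_lists hn t.2).1, (RTree.isRRB_lists hn t.2).2⟩)
    constructor
    · rintro ⟨t₁, h₁⟩ ⟨t₂, h₂⟩ heq
      simp only [Subtype.mk.injEq, Prod.mk.injEq] at heq
      exact Subtype.ext (RTree.eq_of_seqs t₁ t₂ h₁.1.2.2 h₂.1.2.2 heq.1 heq.2)
    · rintro ⟨⟨bs, ms⟩, hbs, hms⟩
      have hbnd : bs.Nodup := hbs.symm.nodup hAnd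
      have hblen : bs.length = n - 1 := by simpa using hbs.length_eq
      have hmlen : ms.length = n := by simpa using hms.length_eq
      have hcross : ∀ b ∈ bs, ∀ m ∈ ms, b < m := by
        intro b hb m hm
        have h1 : b ∈ List.range (n-1) := hbs.mem_iff.mp hb
        have h2 : m ∈ (List.range n).map (fun x => n - 1 + x) := hms.mem_iff.mp hm
        rw [List.mem_range] at h1
        rw [List.mem_map] at h2
        obtain ⟨x, _, rfl⟩ := h2
        omega
      obtain ⟨hB, hL, hV⟩ := RTree.buildAux_spec bs.length bs ms le_rfl hbnd
        (by omega) hcross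
      refine ⟨⟨RTree.buildAux bs.length bs ms, ?_, ?_⟩, ?_⟩
      · refine ⟨?_, ?_, hV⟩
        · rw [← RTree.length_leafSeq, hL]; omega
        · refine (RTree.seq_perm _).trans ?_
          rw [hB, hL, RTree.range_split n hn]
          exact hbs.append hms
      · intro b hb l hl
        rw [hB] at hb; rw [hL] at hl
        exact hcross b hb l hl
      · apply Subtype.ext
        simp [hB, hL]
  rw [key, Nat.card_congr (Equiv.subtypeProdEquivProd
    (p := fun l : List ℕ => l.Perm (List.range (n-1)))
    (q := fun l : List ℕ => l.Perm ((List.range n).map (fun x => n - 1 + x)))), Nat.card_prod,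
    RTree.card_perm _ hAnd, RTree.card_perm _ hMnd]
  simp [Nat.mul_comm]
end
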